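/- arXiv:2404.11432 — 2 statements merged into one kernel-verified Lean document; each statement's English description precedes it below -/
import Mathlib

section
/- Let {(K_t, π_t)}_{t≥1} be a non-decreasing finite environment on a countable discrete set V with π_1(V) ≥ 1. Let T ≥ 1 and C, D > 0 be such that for every 1 ≤ t ≤ T the pair (Q_t, π̃_t) satisfies the Nash inequality N(C, D, T). Then for all 0 ≤ r ≤ t ≤ T and every f : V → ℝ, ‖K_{r,t} f − π̃_r(K_{r,t} f)‖_{ℓ²(π̃_r)} ≤ (4CB/(t − r + 1))^D · (π_t(V)/sqrt(π_r(V))) · ‖f‖_{ℓ¹(π̃_t)}, where B := (1 + 1/T)(1 + ⌈4D⌉). -/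
open scoped BigOperators Classical
open Filter

noncomputable section

variable {V : Type*}

/-- Action of a kernel on functions: `(Kf)(x) = ∑_y K(x,y) f(y)`. -/
def act (K : V → V → ℝ) (f : V → ℝ) : V → ℝ := fun x => ∑' y, K x y * f y

/-- Action of a kernel on measures: `(μK)(y) = ∑_x μ(x) K(x,y)`. -/
def actMeas (K : V → V → ℝ) (μ : V → ℝ) : V → ℝ := fun y => ∑' x, μ x * K x y

/-- `K` is a Markov transition operator. -/
def IsMarkov (K : V → V → ℝ) : Prop :=
  (∀ x y, 0 ≤ K x y) ∧ (∀ x y, K x y ≤ 1) ∧ (∀ x, HasSum (K x) 1)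

/-- Total mass `π(V)` of a measure. -/
def mass (π : V → ℝ) : ℝ := ∑' x, π x

/-- Normalized probability measure `π̃ = π / π(V)`. -/
def nmz (π : V → ℝ) : V → ℝ := fun x => π x / mass π

/-- `π(f) = ∑_x π(x) f(x)`. -/
def integral (p : V → ℝ) (f : V → ℝ) : ℝ := ∑' x, p x * f x

/-- Variance of `f` with respect to a probability measure `p`. -/
def var (p : V → ℝ) (f : V → ℝ) : ℝ :=
  (∑' x, p x * f x ^ 2) - (∑' x, p x * f x) ^ 2

/-- Membership in `ℓ²(π)`. -/
def MemL2 (π : V → ℝ) (f : V → ℝ) : Prop := Summable (fun x => π x * f x ^ 2)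

/-- Adjoint kernel of `K` in `ℓ²(p)`: `K^*(x,y) = p(y) K(y,x)/p(x)`. -/
def adjKer (p : V → ℝ) (K : V → V → ℝ) : V → V → ℝ := fun x y => p y * K y x / p x

/-- Composition of kernels. -/
def kmul (A B : V → V → ℝ) : V → V → ℝ := fun x y => ∑' z, A x z * B z y

/-- Multiplicative symmetrisation `Q = K^* K`. -/
def Qker (p : V → ℝ) (K : V → V → ℝ) : V → V → ℝ := kmul (adjKer p K) K

/-- Dirichlet form `E_{Q,p}(f,f) = (1/2) ∑_{x,y} (f(x)-f(y))² p(x) Q(x,y)`. -/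
def dirichlet (Q : V → V → ℝ) (p : V → ℝ) (f : V → ℝ) : ℝ :=
  (1 / 2) * ∑' x, ∑' y, (f x - f y) ^ 2 * p x * Q x y

/-- The Poincaré constant of `Q` with respect to the probability measure `p`:
the largest `γ ≥ 0` with `γ Var_p f ≤ E_{Q,p}(f,f)` for all `f ∈ ℓ²(p)`. -/
def poincareConst (Q : V → V → ℝ) (p : V → ℝ) : ℝ :=
  sSup {γ : ℝ | 0 ≤ γ ∧ ∀ f : V → ℝ, MemL2 p f → γ * var p f ≤ dirichlet Q p f}

/-- Non-decreasing finite environment `{(K_t, π_t)}_{t ≥ 1}`. -/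
def NonDecEnv (K : ℕ → V → V → ℝ) (π : ℕ → V → ℝ) : Prop :=
  (∀ t, 1 ≤ t → IsMarkov (K t)) ∧
  (∀ t, 1 ≤ t → ∀ x, 0 < π t x) ∧
  (∀ t, 1 ≤ t → Summable (π t)) ∧
  (∀ t, 1 ≤ t → ∀ y, HasSum (fun x => π t x * K t x y) (π t y)) ∧
  (∀ t, 1 ≤ t → ∀ x, π t x ≤ π (t + 1) x)

/-- `K_{s,t} f = K_{s+1} (K_{s+2} ( ⋯ (K_t f)))`. -/
def Kst (K : ℕ → V → V → ℝ) (s t : ℕ) (f : V → ℝ) : V → ℝ :=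
  (List.range (t - s)).foldr (fun i g => act (K (s + 1 + i)) g) f

/-- Dirac mass at `x`. -/
def delta (x : V) : V → ℝ := fun y => if y = x then (1:ℝ) else 0

/-- The law `μ K_1 ⋯ K_t` of the chain at time `t` with initial law `μ`. -/
def law (K : ℕ → V → V → ℝ) (t : ℕ) (μ : V → ℝ) : V → ℝ :=
  (List.range t).foldl (fun ν i => actMeas (K (i + 1)) ν) μ

/-- Total variation distance. -/
def dTV (μ ν : V → ℝ) : ℝ := (1 / 2) * ∑' x, |μ x - ν x|

end

noncomputable section

/-- `ℓ¹(p)`-norm. -/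
def l1norm {V : Type*} (p : V → ℝ) (f : V → ℝ) : ℝ := ∑' x, p x * |f x|

/-- `ℓ²(p)`-norm. -/
def l2norm {V : Type*} (p : V → ℝ) (f : V → ℝ) : ℝ := Real.sqrt (∑' x, p x * f x ^ 2)

/-- The Nash inequality `N(C, D, T)` for the pair `(Q, p)`:
`‖f‖_{ℓ²(p)}^{2+1/D} ≤ C (E_{Q,p}(f,f) + (1/T)‖f‖²_{ℓ²(p)}) ‖f‖_{ℓ¹(p)}^{1/D}`. -/
def NashIneq {V : Type*} (Q : V → V → ℝ) (p : V → ℝ) (C D T : ℝ) : Prop :=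
  ∀ f : V → ℝ,
    l2norm p f ^ ((2 : ℝ) + 1 / D) ≤
      C * (dirichlet Q p f + (1 / T) * l2norm p f ^ (2 : ℕ)) * l1norm p f ^ ((1 : ℝ) / D)

end



set_option maxHeartbeats 1000000

theorem iterlem (ε C : ℝ) (m : ℝ) (T : ℕ) (hε : 0 < ε) (hC : 0 < C) (hT : 1 ≤ T)
    (hm : 2 / ε ≤ m) (a : ℝ) (ha : a = 1 + 1 / (T : ℝ)) :
    ∀ n : ℕ, n ≤ T → ∀ z : ℕ → ℝ,
      (∀ k, 0 ≤ z k) →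
      z 0 ≤ (3 * C) ^ (1 / ε) →
      (∀ k, k < n → z (k + 1) ≤ z k) →
      (∀ k, k < n → z (k + 1) ≤ a * z k - z k ^ (1 + ε) / C) →
      z n ≤ (4 * a * C * (m + 1) / ((n : ℝ) + 1)) ^ (1 / ε) := by
  have hTR : (1 : ℝ) ≤ (T : ℝ) := by exact_mod_cast hT
  have hTpos : (0:ℝ) < (T:ℝ) := by linarith
  have ha1 : 1 ≤ a := by
    rw [ha]
    have h := one_div_nonneg.mpr (le_of_lt hTpos)
    linarith
  have ha0 : 0 < a := by linarith
  have hm0 : 0 < m := lt_of_lt_of_le (by positivity) hm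
  intro n
  induction n using Nat.strong_induction_on with
  | _ n IH =>
    intro hnT z hznn hz0 hmono hrec
    rcases Nat.eq_zero_or_pos n with hn0 | hn1
    · subst hn0
      refine hz0.trans (Real.rpow_le_rpow (by positivity) ?_ (by positivity))
      have h1 : ((0:ℕ):ℝ) + 1 = 1 := by norm_num
      rw [h1, div_one]
      have h2 : 1 ≤ a * (m + 1) := by nlinarith
      nlinarith [mul_le_mul_of_nonneg_left h2 (le_of_lt hC)]
    by_contra hcon
    push_neg at hcon
    set θ : ℕ → ℝ := fun k => (4 * a * C * (m + 1) / ((k : ℝ) + 1)) ^ (1 / ε) with hθ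
    have hθpos : ∀ k, 0 < θ k := fun k => Real.rpow_pos_of_pos (by positivity) _
    have hanti : ∀ k l, k ≤ l → l ≤ n → z l ≤ z k := by
      intro k l hkl hln
      induction l with
      | zero => simp_all
      | succ l ihl =>
        rcases Nat.eq_or_lt_of_le hkl with h | h
        · rw [h]
        · exact (hmono l (by omega)).trans (ihl (by omega) (by omega))
    set j := (n - 1) / 2 with hj
    have hjn : j < n := by omega
    have hzj : z j ≤ θ j := by
      refine IH j hjn (by omega) z hznn hz0 ?_ ?_
      · exact fun k hk => hmono k (by omega)
      · exact fun k hk => hrec k (by omega)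
    have hznpos : 0 < z n := lt_trans (hθpos n) hcon
    set q : ℝ := a * (1 - 4 * (m + 1) / ((n : ℝ) + 1)) with hq
    have hθε : θ n ^ ε = 4 * a * C * (m + 1) / ((n : ℝ) + 1) := by
      rw [hθ]
      rw [← Real.rpow_mul (by positivity), one_div, inv_mul_cancel₀ hε.ne', Real.rpow_one]
    have hkey : ∀ k, j ≤ k → k < n → z (k + 1) ≤ q * z k := by
      intro k hjk hkn
      have hzk : θ n < z k := lt_of_lt_of_le hcon (hanti k n (le_of_lt hkn) le_rfl)
      have hzkpos : 0 < z k := lt_trans (hθpos n) hzk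
      have hzke : (4 * a * C * (m + 1) / ((n : ℝ) + 1)) ≤ z k ^ ε := by
        rw [← hθε]
        exact Real.rpow_le_rpow (le_of_lt (hθpos n)) (le_of_lt hzk) (le_of_lt hε)
      have h1 : z k ^ (1 + ε) = z k * z k ^ ε := by
        rw [Real.rpow_add hzkpos, Real.rpow_one]
      have h3 : z k * (4 * a * (m + 1) / ((n : ℝ) + 1)) ≤ z k ^ (1 + ε) / C := by
        rw [h1, le_div_iff₀ hC]
        calc z k * (4 * a * (m + 1) / ((n : ℝ) + 1)) * C
            = z k * (4 * a * C * (m + 1) / ((n : ℝ) + 1)) := by ring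
          _ ≤ z k * z k ^ ε := mul_le_mul_of_nonneg_left hzke (le_of_lt hzkpos)
      have h4 := hrec k hkn
      have : z (k + 1) ≤ a * z k - z k * (4 * a * (m + 1) / ((n : ℝ) + 1)) := by linarith
      calc z (k + 1) ≤ a * z k - z k * (4 * a * (m + 1) / ((n : ℝ) + 1)) := this
        _ = q * z k := by rw [hq]; ring
    rcases le_or_gt q 0 with hq0 | hqpos
    · have h1 : z (j + 1) ≤ q * z j := hkey j le_rfl hjn
      have h2 : 0 < z (j + 1) := lt_of_lt_of_le hznpos (hanti (j + 1) n (by omega) le_rfl)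
      have h3 : q * z j ≤ 0 := mul_nonpos_of_nonpos_of_nonneg hq0 (hznn j)
      linarith
    -- q > 0 : geometric decay
    have hpow : ∀ i, j + i ≤ n → z (j + i) ≤ q ^ i * z j := by
      intro i
      induction i with
      | zero => intro _; simp
      | succ i ih =>
        intro h
        have h1 : z (j + i + 1) ≤ q * z (j + i) := hkey (j + i) (by omega) (by omega)
        have h2 : z (j + i) ≤ q ^ i * z j := ih (by omega)
        calc z (j + (i + 1)) = z (j + i + 1) := by ring_nf
          _ ≤ q * z (j + i) := h1
          _ ≤ q * (q ^ i * z j) := mul_le_mul_of_nonneg_left h2 hqpos.le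
          _ = q ^ (i + 1) * z j := by ring
    have hzn : z n ≤ q ^ (n - j) * θ j := by
      have h1 := hpow (n - j) (by omega)
      rw [show j + (n - j) = n by omega] at h1
      exact h1.trans (mul_le_mul_of_nonneg_left hzj (by positivity))
    -- bound q^(n-j)
    have hc0 : (0:ℝ) ≤ 4 * (m + 1) / ((n : ℝ) + 1) := by positivity
    have hqe : q ≤ a * Real.exp (-(4 * (m + 1) / ((n : ℝ) + 1))) := by
      have h1 := Real.add_one_le_exp (-(4 * (m + 1) / ((n : ℝ) + 1)))
      have h2 : 1 - 4 * (m + 1) / ((n : ℝ) + 1) ≤ Real.exp (-(4 * (m + 1) / ((n : ℝ) + 1))) := by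
        linarith
      rw [hq]
      exact mul_le_mul_of_nonneg_left h2 ha0.le
    have hq1 : q ^ (n - j) ≤ a ^ (n - j) *
        Real.exp (((n - j : ℕ) : ℝ) * (-(4 * (m + 1) / ((n : ℝ) + 1)))) := by
      calc q ^ (n - j) ≤ (a * Real.exp (-(4 * (m + 1) / ((n : ℝ) + 1)))) ^ (n - j) :=
            pow_le_pow_left₀ hqpos.le hqe _
        _ = a ^ (n - j) * (Real.exp (-(4 * (m + 1) / ((n : ℝ) + 1)))) ^ (n - j) := mul_pow _ _ _
        _ = _ := by rw [← Real.exp_nat_mul]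
    have haT : a ^ (n - j) ≤ Real.exp 1 := by
      have h1 : a ^ (n - j) ≤ a ^ T := pow_le_pow_right₀ ha1 (by omega)
      have h2 : a ≤ Real.exp (1 / (T : ℝ)) := by
        have := Real.add_one_le_exp (1 / (T : ℝ)); rw [ha]; linarith
      have h3 : a ^ T ≤ (Real.exp (1 / (T : ℝ))) ^ T := pow_le_pow_left₀ ha0.le h2 T
      have h4 : (Real.exp (1 / (T : ℝ))) ^ T = Real.exp 1 := by
        rw [← Real.exp_nat_mul, mul_one_div, div_self (ne_of_gt hTpos)]
      linarith
    have hhalf : ((n : ℝ) + 1) / 2 ≤ ((n - j : ℕ) : ℝ) := by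
      have h1 : n + 1 ≤ 2 * (n - j) := by omega
      have h2 : ((n:ℕ):ℝ) + 1 ≤ 2 * ((n - j : ℕ) : ℝ) := by exact_mod_cast h1
      linarith
    have hexp2 : Real.exp (((n - j : ℕ) : ℝ) * (-(4 * (m + 1) / ((n : ℝ) + 1)))) ≤
        Real.exp (-(2 * (m + 1))) := by
      apply Real.exp_le_exp.mpr
      have hn1 : (0:ℝ) < (n : ℝ) + 1 := by positivity
      have hkey2 : 2 * (m + 1) ≤ ((n - j : ℕ) : ℝ) * (4 * (m + 1)) / ((n : ℝ) + 1) := by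
        rw [le_div_iff₀ hn1]
        have h5 : (n:ℝ) + 1 ≤ 2 * ((n - j : ℕ) : ℝ) := by linarith
        have h6 := mul_le_mul_of_nonneg_right h5 (show (0:ℝ) ≤ m + 1 by linarith)
        linarith
      calc ((n - j : ℕ) : ℝ) * (-(4 * (m + 1) / ((n : ℝ) + 1)))
          = -(((n - j : ℕ) : ℝ) * (4 * (m + 1)) / ((n : ℝ) + 1)) := by ring
        _ ≤ -(2 * (m + 1)) := neg_le_neg hkey2
    have hθj : θ j ≤ (3:ℝ) ^ (1/ε) * θ n := by
      have hn3 : (n:ℝ) + 1 ≤ 3 * ((j:ℝ) + 1) := by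
        have : n + 1 ≤ 3 * (j + 1) := by omega
        exact_mod_cast this
      have h31 : 4 * a * C * (m + 1) / ((j : ℝ) + 1) ≤
          3 * (4 * a * C * (m + 1) / ((n : ℝ) + 1)) := by
        have hnum : (0:ℝ) ≤ 4 * a * C * (m+1) := by positivity
        have hrw : 3 * (4 * a * C * (m + 1) / ((n : ℝ) + 1)) =
            3 * (4 * a * C * (m + 1)) / ((n : ℝ) + 1) := by ring
        rw [hrw, div_le_div_iff₀ (by positivity) (by positivity)]
        nlinarith [mul_le_mul_of_nonneg_left hn3 hnum]
      calc θ j ≤ (3 * (4 * a * C * (m + 1) / ((n : ℝ) + 1))) ^ (1/ε) :=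
            Real.rpow_le_rpow (by positivity) h31 (by positivity)
        _ = (3:ℝ) ^ (1/ε) * θ n := Real.mul_rpow (by norm_num) (by positivity)
    have h3e : (3:ℝ) ^ (1/ε) ≤ Real.exp (2 * m + 1) := by
      rw [Real.rpow_def_of_pos (by norm_num : (0:ℝ) < 3)]
      apply Real.exp_le_exp.mpr
      have hlog : Real.log 3 ≤ 2 := by
        have := Real.log_le_sub_one_of_pos (by norm_num : (0:ℝ) < 3); linarith
      have hinv : 1 / ε ≤ m / 2 := by
        rw [div_le_div_iff₀ hε two_pos]
        rw [div_le_iff₀ hε] at hm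
        linarith
      have h1 : Real.log 3 * (1 / ε) ≤ 2 * (m / 2) := by
        apply mul_le_mul hlog hinv (by positivity) (by norm_num)
      linarith
    -- combine
    have hfinal : z n ≤ θ n := by
      have e1 : (0:ℝ) < Real.exp (-(2*(m+1))) := Real.exp_pos _
      have e2 : (0:ℝ) < Real.exp 1 := Real.exp_pos _
      have hq2 : q ^ (n - j) ≤ Real.exp 1 * Real.exp (-(2 * (m + 1))) := by
        calc q ^ (n - j) ≤ a ^ (n - j) *
              Real.exp (((n - j : ℕ) : ℝ) * (-(4 * (m + 1) / ((n : ℝ) + 1)))) := hq1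
          _ ≤ a ^ (n - j) * Real.exp (-(2 * (m + 1))) :=
              mul_le_mul_of_nonneg_left hexp2 (by positivity)
          _ ≤ Real.exp 1 * Real.exp (-(2 * (m + 1))) :=
              mul_le_mul_of_nonneg_right haT e1.le
      calc z n ≤ q ^ (n - j) * θ j := hzn
        _ ≤ (Real.exp 1 * Real.exp (-(2 * (m + 1)))) * θ j := by
            apply mul_le_mul_of_nonneg_right hq2 (hθpos j).le
        _ ≤ (Real.exp 1 * Real.exp (-(2 * (m + 1)))) * ((3:ℝ) ^ (1/ε) * θ n) := by
            apply mul_le_mul_of_nonneg_left hθj (by positivity)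
        _ ≤ (Real.exp 1 * Real.exp (-(2 * (m + 1)))) * (Real.exp (2 * m + 1) * θ n) := by
            apply mul_le_mul_of_nonneg_left
              (mul_le_mul_of_nonneg_right h3e (hθpos n).le) (by positivity)
        _ = θ n := by
            have hexpcomb : Real.exp 1 * Real.exp (-(2*(m+1))) * Real.exp (2*m+1) = 1 := by
              rw [← Real.exp_add, ← Real.exp_add,
                show (1:ℝ) + -(2*(m+1)) + (2*m+1) = 0 by ring, Real.exp_zero]
            calc (Real.exp 1 * Real.exp (-(2 * (m + 1)))) * (Real.exp (2 * m + 1) * θ n)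
                = (Real.exp 1 * Real.exp (-(2*(m+1))) * Real.exp (2*m+1)) * θ n := by ring
              _ = θ n := by rw [hexpcomb, one_mul]
    exact absurd hfinal (not_le.mpr hcon)


open scoped BigOperators Classical
set_option maxHeartbeats 1000000

section finlem
variable {V : Type*} [Fintype V]

lemma act_fin (k : V → V → ℝ) (h : V → ℝ) (x : V) : act k h x = ∑ y, k x y * h y :=
  tsum_fintype _

lemma Qker_fin (p : V → ℝ) (k : V → V → ℝ) (x y : V) :
    Qker p k x y = ∑ z, p z * k z x / p x * k z y := by
  simp [Qker, kmul, adjKer, tsum_fintype]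

lemma pQ_eq (p : V → ℝ) (k : V → V → ℝ) (hp : ∀ x, 0 < p x) (x y : V) :
    p x * Qker p k x y = ∑ z, p z * k z x * k z y := by
  rw [Qker_fin, Finset.mul_sum]
  refine Finset.sum_congr rfl fun z _ => ?_
  field_simp
  rw [div_eq_iff (hp x).ne']; ring

lemma quad_id (w : V → ℝ) (c : ℝ) (hw : ∑ y, w y = 1) (h : V → ℝ) :
    ∑ x, ∑ y, (h x - h y) ^ 2 * (c * (w x * w y)) =
      2 * c * (∑ y, w y * h y ^ 2) - 2 * c * (∑ y, w y * h y) ^ 2 := by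
  have e1 : ∀ x : V, ∑ y, (h x - h y) ^ 2 * (c * (w x * w y)) =
      c * (w x * h x ^ 2) + (c * w x) * (∑ y, w y * h y ^ 2)
        - (2 * c * (w x * h x)) * (∑ y, w y * h y) := by
    intro x
    have e2 : ∀ y ∈ Finset.univ, (h x - h y) ^ 2 * (c * (w x * w y)) =
        c * (w x * h x ^ 2) * w y + (c * w x) * (w y * h y ^ 2)
          - (2 * c * (w x * h x)) * (w y * h y) := fun y _ => by ring
    rw [Finset.sum_congr rfl e2, Finset.sum_sub_distrib, Finset.sum_add_distrib,
      ← Finset.mul_sum, ← Finset.mul_sum, ← Finset.mul_sum, hw, mul_one]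
  rw [Finset.sum_congr rfl (fun x _ => e1 x), Finset.sum_sub_distrib, Finset.sum_add_distrib]
  rw [← Finset.sum_mul, ← Finset.sum_mul, ← Finset.mul_sum]
  have e4 : ∑ x, c * w x = c * ∑ x, w x := by rw [Finset.mul_sum]
  have e5 : ∑ x, 2 * c * (w x * h x) = 2 * c * ∑ x, w x * h x := by rw [Finset.mul_sum]
  rw [e4, e5, hw, mul_one]
  ring


lemma dirichlet_spectral (p : V → ℝ) (k : V → V → ℝ) (h : V → ℝ)
    (hp : ∀ x, 0 < p x) (hksum : ∀ x, ∑ y, k x y = 1)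
    (hstat : ∀ y, ∑ x, p x * k x y = p y) :
    dirichlet (Qker p k) p h =
      ∑ x, p x * h x ^ 2 - ∑ z, p z * (∑ y, k z y * h y) ^ 2 := by
  have step1 : dirichlet (Qker p k) p h =
      (1/2) * ∑ x, ∑ y, (h x - h y) ^ 2 * p x * Qker p k x y := by
    simp [dirichlet, tsum_fintype]
  have step2 : ∀ x y : V, (h x - h y) ^ 2 * p x * Qker p k x y =
      ∑ z, (h x - h y) ^ 2 * (p z * (k z x * k z y)) := by
    intro x y
    rw [mul_assoc, pQ_eq p k hp, Finset.mul_sum]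
    exact Finset.sum_congr rfl fun z _ => by ring
  have step3 : ∑ x, ∑ y, (h x - h y) ^ 2 * p x * Qker p k x y =
      ∑ z, ∑ x, ∑ y, (h x - h y) ^ 2 * (p z * (k z x * k z y)) := by
    rw [Finset.sum_congr rfl (fun x _ => Finset.sum_congr rfl (fun y _ => step2 x y))]
    rw [Finset.sum_congr rfl (fun x (_ : x ∈ Finset.univ) => Finset.sum_comm)]
    exact Finset.sum_comm
  have step4 : ∀ z : V, ∑ x, ∑ y, (h x - h y) ^ 2 * (p z * (k z x * k z y)) =
      2 * p z * (∑ y, k z y * h y ^ 2) - 2 * p z * (∑ y, k z y * h y) ^ 2 :=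
    fun z => quad_id (k z) (p z) (hksum z) h
  have step5 : ∑ z, (2 * p z * (∑ y, k z y * h y ^ 2) - 2 * p z * (∑ y, k z y * h y) ^ 2) =
      2 * (∑ x, p x * h x ^ 2) - 2 * ∑ z, p z * (∑ y, k z y * h y) ^ 2 := by
    rw [Finset.sum_sub_distrib]
    have e1 : ∑ z, 2 * p z * (∑ y, k z y * h y ^ 2) = 2 * ∑ x, p x * h x ^ 2 :=
      calc ∑ z, 2 * p z * (∑ y, k z y * h y ^ 2)
          = ∑ z, ∑ y, (2:ℝ) * h y ^ 2 * (p z * k z y) := by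
            refine Finset.sum_congr rfl fun z _ => ?_
            rw [Finset.mul_sum]; exact Finset.sum_congr rfl fun y _ => by ring
        _ = ∑ y, ∑ z, (2:ℝ) * h y ^ 2 * (p z * k z y) := Finset.sum_comm
        _ = ∑ y, (2:ℝ) * h y ^ 2 * (∑ z, p z * k z y) := by
            refine Finset.sum_congr rfl fun y _ => ?_; rw [← Finset.mul_sum]
        _ = ∑ y, p y * h y ^ 2 * 2 := by
            refine Finset.sum_congr rfl fun y _ => ?_; rw [hstat y]; ring
        _ = 2 * ∑ x, p x * h x ^ 2 := by rw [← Finset.sum_mul]; ring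
    have e2 : ∑ z, 2 * p z * (∑ y, k z y * h y) ^ 2
        = 2 * ∑ z, p z * (∑ y, k z y * h y) ^ 2 := by
      rw [Finset.mul_sum]
      exact Finset.sum_congr rfl fun z _ => by ring
    rw [e1, e2]
  rw [step1, step3, Finset.sum_congr rfl (fun z _ => step4 z), step5]
  ring

lemma dirichlet_nonneg (Q : V → V → ℝ) (p : V → ℝ) (h : V → ℝ)
    (hp : ∀ x, 0 ≤ p x) (hQ : ∀ x y, 0 ≤ Q x y) : 0 ≤ dirichlet Q p h := by
  rw [dirichlet]
  simp only [tsum_fintype]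
  have : (0:ℝ) ≤ ∑ x, ∑ y, (h x - h y) ^ 2 * p x * Q x y :=
    Finset.sum_nonneg fun x _ => Finset.sum_nonneg fun y _ =>
      mul_nonneg (mul_nonneg (sq_nonneg _) (hp x)) (hQ x y)
  linarith

lemma Qker_nonneg (p : V → ℝ) (k : V → V → ℝ) (hp : ∀ x, 0 < p x)
    (hk : ∀ x y, 0 ≤ k x y) (x y : V) : 0 ≤ Qker p k x y := by
  rw [Qker_fin]
  exact Finset.sum_nonneg fun z _ =>
    mul_nonneg (div_nonneg (mul_nonneg (hp z).le (hk z x)) (hp x).le) (hk z y)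

lemma l1_step (σ : V → ℝ) (k : V → V → ℝ) (h : V → ℝ) (hσ : ∀ x, 0 ≤ σ x)
    (hknn : ∀ x y, 0 ≤ k x y) (hstat : ∀ y, ∑ x, σ x * k x y = σ y) :
    ∑ x, σ x * |∑ y, k x y * h y| ≤ ∑ y, σ y * |h y| :=
  calc ∑ x, σ x * |∑ y, k x y * h y| ≤ ∑ x, σ x * (∑ y, k x y * |h y|) := by
        refine Finset.sum_le_sum fun x _ => mul_le_mul_of_nonneg_left ?_ (hσ x)
        calc |∑ y, k x y * h y| ≤ ∑ y, |k x y * h y| := Finset.abs_sum_le_sum_abs _ _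
          _ = ∑ y, k x y * |h y| := Finset.sum_congr rfl fun y _ => by
              rw [abs_mul, abs_of_nonneg (hknn x y)]
    _ = ∑ x, ∑ y, σ x * (k x y * |h y|) := Finset.sum_congr rfl fun x _ => Finset.mul_sum _ _ _
    _ = ∑ y, ∑ x, σ x * (k x y * |h y|) := Finset.sum_comm
    _ = ∑ y, (∑ x, σ x * k x y) * |h y| := by
        refine Finset.sum_congr rfl fun y _ => ?_
        rw [Finset.sum_mul]
        exact Finset.sum_congr rfl fun x _ => by ring
    _ = ∑ y, σ y * |h y| := Finset.sum_congr rfl fun y _ => by rw [hstat y]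

lemma nash_sums (Q : V → V → ℝ) (p : V → ℝ) (C D Tr : ℝ) (hD : 0 < D)
    (hp : ∀ x, 0 ≤ p x) (hN : NashIneq Q p C D Tr) (h : V → ℝ) :
    (∑ x, p x * h x ^ 2) ^ ((1:ℝ) + 1/(2*D)) ≤
      C * (dirichlet Q p h + 1/Tr * ∑ x, p x * h x ^ 2) * (∑ x, p x * |h x|) ^ ((1:ℝ)/D) := by
  have hNN : (0:ℝ) ≤ ∑ x, p x * h x ^ 2 :=
    Finset.sum_nonneg fun x _ => mul_nonneg (hp x) (sq_nonneg _)
  have h1 := hN h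
  simp only [l2norm, l1norm, tsum_fintype] at h1
  have h2 : Real.sqrt (∑ x, p x * h x ^ 2) ^ ((2:ℝ) + 1/D)
      = (∑ x, p x * h x ^ 2) ^ ((1:ℝ) + 1/(2*D)) := by
    rw [Real.sqrt_eq_rpow, ← Real.rpow_mul hNN]
    congr 1
    field_simp
  have h3 : Real.sqrt (∑ x, p x * h x ^ 2) ^ (2:ℕ) = ∑ x, p x * h x ^ 2 :=
    Real.sq_sqrt hNN
  rw [h2, h3] at h1
  exact h1

lemma nmz_fin (πc : V → ℝ) (x : V) : nmz πc x = πc x / ∑ y, πc y := by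
  rw [nmz, mass, tsum_fintype]

lemma key_facts (πc : V → ℝ) (k : V → V → ℝ)
    (hπc : ∀ x, 0 < πc x) (hM1 : 1 ≤ ∑ x, πc x)
    (hksum : ∀ x, ∑ y, k x y = 1)
    (hstat : ∀ y, ∑ x, πc x * k x y = πc y) :
    (∀ x, 0 < nmz πc x) ∧ (∀ y, ∑ x, nmz πc x * k x y = nmz πc y) ∧
      (∀ g : V → ℝ, ∑ x, πc x * g x = (∑ x, πc x) * ∑ x, nmz πc x * g x) := by
  have hM0 : (0:ℝ) < ∑ x, πc x := lt_of_lt_of_le one_pos hM1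
  refine ⟨fun x => by rw [nmz_fin]; exact div_pos (hπc x) hM0, fun y => ?_, fun g => ?_⟩
  · simp only [nmz_fin, div_mul_eq_mul_div, ← Finset.sum_div]
    rw [hstat y]
  · simp only [nmz_fin, div_mul_eq_mul_div, ← Finset.sum_div]
    rw [mul_div_cancel₀ _ (ne_of_gt hM0)]

lemma key_step (πp πc : V → ℝ) (k : V → V → ℝ) (C D : ℝ) (Tn : ℕ) (ℓ : ℝ) (h : V → ℝ)
    (hC : 0 < C) (hD : 0 < D) (hTn : 1 ≤ Tn)
    (hπc : ∀ x, 0 < πc x) (hπp : ∀ x, 0 ≤ πp x) (hmono : ∀ x, πp x ≤ πc x)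
    (hknn : ∀ x y, 0 ≤ k x y) (hksum : ∀ x, ∑ y, k x y = 1)
    (hstat : ∀ y, ∑ x, πc x * k x y = πc y)
    (hM1 : 1 ≤ ∑ x, πc x)
    (hN : NashIneq (Qker (nmz πc) k) (nmz πc) C D (Tn : ℝ))
    (hℓpos : 0 < ℓ) (hℓ : ∑ x, πc x * |h x| ≤ ℓ) :
    ∑ x, πp x * (act k h x) ^ 2 ≤ (1 + 1/(Tn:ℝ)) * (∑ x, πc x * h x ^ 2)
      - (∑ x, πc x * h x ^ 2) ^ ((1:ℝ) + 1/(2*D)) / (C * ℓ ^ ((1:ℝ)/D)) := by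
  obtain ⟨hppos, hpstat, hscale⟩ := key_facts πc k hπc hM1 hksum hstat
  set M : ℝ := ∑ x, πc x with hMdef
  have hM0 : (0:ℝ) < M := lt_of_lt_of_le one_pos hM1
  set p : V → ℝ := nmz πc with hpdef
  set N : ℝ := ∑ x, p x * h x ^ 2 with hNdef
  set L : ℝ := ∑ x, p x * |h x| with hLdef
  set E : ℝ := dirichlet (Qker p k) p h with hEdef
  have hNnn : 0 ≤ N := Finset.sum_nonneg fun x _ => mul_nonneg (hppos x).le (sq_nonneg _)
  have hLnn : 0 ≤ L := Finset.sum_nonneg fun x _ => mul_nonneg (hppos x).le (abs_nonneg _)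
  have hEnn : 0 ≤ E := dirichlet_nonneg _ _ _ (fun x => (hppos x).le)
    (Qker_nonneg p k hppos hknn)
  have hTn1 : (1:ℝ) ≤ (Tn:ℝ) := by exact_mod_cast hTn
  have hTn0 : (0:ℝ) < (Tn:ℝ) := lt_of_lt_of_le one_pos hTn1
  -- sums relations
  have hNscale : ∑ x, πc x * h x ^ 2 = M * N := hscale _
  have hLscale : ∑ x, πc x * |h x| = M * L := hscale _
  have hMLl : M * L ≤ ℓ := by rw [← hLscale]; exact hℓ
  -- spectral identity
  have hspec : E = N - ∑ x, p x * (∑ y, k x y * h y) ^ 2 :=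
    dirichlet_spectral p k h hppos hksum hpstat
  have hact : ∀ x, act k h x = ∑ y, k x y * h y := fun x => act_fin k h x
  -- step A
  have hA : ∑ x, πp x * (act k h x) ^ 2 ≤ M * N - M * E := by
    have h1 : ∑ x, πp x * (act k h x) ^ 2 ≤ ∑ x, πc x * (act k h x) ^ 2 :=
      Finset.sum_le_sum fun x _ => mul_le_mul_of_nonneg_right (hmono x) (sq_nonneg _)
    have h2 : ∑ x, πc x * (act k h x) ^ 2 = M * ∑ x, p x * (act k h x) ^ 2 := hscale _
    have h3 : ∑ x, p x * (act k h x) ^ 2 = N - E := by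
      rw [hspec]
      have : ∑ x, p x * (act k h x) ^ 2 = ∑ x, p x * (∑ y, k x y * h y) ^ 2 :=
        Finset.sum_congr rfl fun x _ => by rw [hact x]
      rw [this]; ring
    calc ∑ x, πp x * (act k h x) ^ 2 ≤ ∑ x, πc x * (act k h x) ^ 2 := h1
      _ = M * (N - E) := by rw [h2, h3]
      _ = M * N - M * E := by ring
  -- claim B
  have hB : (M * N) ^ ((1:ℝ) + 1/(2*D)) / (C * ℓ ^ ((1:ℝ)/D)) ≤ M * E + M * N / Tn := by
    rcases eq_or_lt_of_le hLnn with hL0 | hLpos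
    · -- L = 0, so h ≡ 0 and N = 0
      have hzero : ∀ x, h x = 0 := by
        intro x
        have hterm := Finset.sum_eq_zero_iff_of_nonneg
          (fun y (_ : y ∈ Finset.univ) => mul_nonneg (hppos y).le (abs_nonneg (h y)))
        rw [← hLdef, ← hL0] at hterm
        have := (hterm.mp rfl) x (Finset.mem_univ x)
        have habs : |h x| = 0 := by
          rcases mul_eq_zero.mp this with h' | h'
          · exact absurd h' (ne_of_gt (hppos x))
          · exact h'
        exact abs_eq_zero.mp habs
      have hN0 : N = 0 := by
        rw [hNdef]
        exact Finset.sum_eq_zero fun x _ => by rw [hzero x]; ring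
      rw [hN0, mul_zero, Real.zero_rpow (by positivity), zero_div]
      positivity
    · -- L > 0
      have hnash := nash_sums (Qker p k) p C D (Tn:ℝ) hD (fun x => (hppos x).le) hN h
      rw [← hNdef, ← hLdef, ← hEdef] at hnash
      have hLp : (0:ℝ) < L ^ ((1:ℝ)/D) := Real.rpow_pos_of_pos hLpos _
      have h4 : N ^ ((1:ℝ) + 1/(2*D)) / (C * L ^ ((1:ℝ)/D)) ≤ E + N / Tn := by
        rw [div_le_iff₀ (by positivity)]
        calc N ^ ((1:ℝ) + 1/(2*D)) ≤ C * (E + 1/(Tn:ℝ) * N) * L ^ ((1:ℝ)/D) := hnash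
          _ = (E + N / (Tn:ℝ)) * (C * L ^ ((1:ℝ)/D)) := by ring
      have h5 : M * (N ^ ((1:ℝ) + 1/(2*D)) / (C * L ^ ((1:ℝ)/D))) ≤ M * E + M * N / Tn := by
        have := mul_le_mul_of_nonneg_left h4 hM0.le
        calc M * (N ^ ((1:ℝ) + 1/(2*D)) / (C * L ^ ((1:ℝ)/D)))
            ≤ M * (E + N / Tn) := this
          _ = M * E + M * N / Tn := by ring
      refine le_trans ?_ h5
      -- (M N)^(1+eps) / (C ℓ^(1/D)) ≤ M * (N^(1+eps)/(C L^(1/D)))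
      have hkey : M ^ ((1:ℝ) + 1/(2*D)) * L ^ ((1:ℝ)/D) ≤ M * ℓ ^ ((1:ℝ)/D) := by
        have e1 : M ^ ((1:ℝ) + 1/(2*D)) = M * M ^ ((1:ℝ)/(2*D)) := by
          rw [Real.rpow_add hM0, Real.rpow_one]
        have e2 : M ^ ((1:ℝ)/(2*D)) = (M ^ ((1:ℝ)/2)) ^ ((1:ℝ)/D) := by
          rw [← Real.rpow_mul hM0.le]
          congr 1
          rw [div_mul_div_comm, one_mul]
        have e3 : M ^ ((1:ℝ)/2) * L ≤ ℓ := by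
          have h6 : M ^ ((1:ℝ)/2) ≤ M := by
            have := Real.rpow_le_rpow_of_exponent_le hM1 (by norm_num : (1:ℝ)/2 ≤ 1)
            rwa [Real.rpow_one] at this
          calc M ^ ((1:ℝ)/2) * L ≤ M * L := mul_le_mul_of_nonneg_right h6 hLnn
            _ ≤ ℓ := hMLl
        have e4 : (M ^ ((1:ℝ)/2)) ^ ((1:ℝ)/D) * L ^ ((1:ℝ)/D) ≤ ℓ ^ ((1:ℝ)/D) := by
          rw [← Real.mul_rpow (by positivity) hLnn]
          exact Real.rpow_le_rpow (by positivity) e3 (by positivity)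
        calc M ^ ((1:ℝ) + 1/(2*D)) * L ^ ((1:ℝ)/D)
            = M * ((M ^ ((1:ℝ)/2)) ^ ((1:ℝ)/D) * L ^ ((1:ℝ)/D)) := by
              rw [e1, e2]; ring
          _ ≤ M * ℓ ^ ((1:ℝ)/D) := mul_le_mul_of_nonneg_left e4 hM0.le
      have hmulrpow : (M * N) ^ ((1:ℝ) + 1/(2*D))
          = M ^ ((1:ℝ) + 1/(2*D)) * N ^ ((1:ℝ) + 1/(2*D)) :=
        Real.mul_rpow hM0.le hNnn
      rw [hmulrpow, div_le_iff₀ (by positivity), mul_comm M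
        (N ^ ((1:ℝ) + 1/(2*D)) / (C * L ^ ((1:ℝ)/D))), div_mul_eq_mul_div,
        div_mul_eq_mul_div, le_div_iff₀ (by positivity)]
      have hCN : (0:ℝ) ≤ C * N ^ ((1:ℝ) + 1/(2*D)) := by positivity
      calc M ^ ((1:ℝ) + 1/(2*D)) * N ^ ((1:ℝ) + 1/(2*D)) * (C * L ^ ((1:ℝ)/D))
          = (C * N ^ ((1:ℝ) + 1/(2*D))) * (M ^ ((1:ℝ) + 1/(2*D)) * L ^ ((1:ℝ)/D)) := by ring
        _ ≤ (C * N ^ ((1:ℝ) + 1/(2*D))) * (M * ℓ ^ ((1:ℝ)/D)) :=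
            mul_le_mul_of_nonneg_left hkey hCN
        _ = N ^ ((1:ℝ) + 1/(2*D)) * M * (C * ℓ ^ ((1:ℝ)/D)) := by ring
  -- combine
  rw [hNscale]
  have hexp : (1 + 1/(Tn:ℝ)) * (M*N) = M*N + M*N/(Tn:ℝ) := by ring
  linarith [hA, hB]

lemma base_step (πc : V → ℝ) (k : V → V → ℝ) (C D : ℝ) (Tn : ℕ) (ℓ : ℝ) (h : V → ℝ)
    (hC : 0 < C) (hD : 0 < D) (hTn : 1 ≤ Tn)
    (hπc : ∀ x, 0 < πc x)
    (hknn : ∀ x y, 0 ≤ k x y) (hksum : ∀ x, ∑ y, k x y = 1)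
    (hstat : ∀ y, ∑ x, πc x * k x y = πc y)
    (hM1 : 1 ≤ ∑ x, πc x)
    (hN : NashIneq (Qker (nmz πc) k) (nmz πc) C D (Tn : ℝ)) (hℓ : ∑ x, πc x * |h x| ≤ ℓ) :
    ∑ x, πc x * h x ^ 2 ≤ (3*C) ^ ((2:ℝ)*D) * ℓ ^ 2 := by
  obtain ⟨hppos, hpstat, hscale⟩ := key_facts πc k hπc hM1 hksum hstat
  set M : ℝ := ∑ x, πc x with hMdef
  have hM0 : (0:ℝ) < M := lt_of_lt_of_le one_pos hM1
  set p : V → ℝ := nmz πc with hpdef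
  set N : ℝ := ∑ x, p x * h x ^ 2 with hNdef
  set L : ℝ := ∑ x, p x * |h x| with hLdef
  set E : ℝ := dirichlet (Qker p k) p h with hEdef
  have hNnn : 0 ≤ N := Finset.sum_nonneg fun x _ => mul_nonneg (hppos x).le (sq_nonneg _)
  have hLnn : 0 ≤ L := Finset.sum_nonneg fun x _ => mul_nonneg (hppos x).le (abs_nonneg _)
  have hTn1 : (1:ℝ) ≤ (Tn:ℝ) := by exact_mod_cast hTn
  have hTn0 : (0:ℝ) < (Tn:ℝ) := lt_of_lt_of_le one_pos hTn1
  have hNscale : ∑ x, πc x * h x ^ 2 = M * N := hscale _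
  have hLscale : ∑ x, πc x * |h x| = M * L := hscale _
  have hMLl : M * L ≤ ℓ := by rw [← hLscale]; exact hℓ
  have hℓnn : 0 ≤ ℓ := le_trans (by positivity) hMLl
  have hspec : E = N - ∑ x, p x * (∑ y, k x y * h y) ^ 2 :=
    dirichlet_spectral p k h hppos hksum hpstat
  have hEleN : E ≤ N := by
    have : (0:ℝ) ≤ ∑ x, p x * (∑ y, k x y * h y) ^ 2 :=
      Finset.sum_nonneg fun x _ => mul_nonneg (hppos x).le (sq_nonneg _)
    rw [hspec]; linarith
  -- Nash gives N ≤ (3C)^(2D) L^2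
  have hNL : N ≤ (3*C) ^ ((2:ℝ)*D) * L ^ 2 := by
    rcases eq_or_lt_of_le hNnn with hN0 | hNpos
    · rw [← hN0]; positivity
    · have hnash := nash_sums (Qker p k) p C D (Tn:ℝ) hD (fun x => (hppos x).le) hN h
      rw [← hNdef, ← hLdef, ← hEdef] at hnash
      have h1 : N ^ ((1:ℝ) + 1/(2*D)) ≤ 3*C * N * L ^ ((1:ℝ)/D) := by
        have hbnd : C * (E + 1/(Tn:ℝ) * N) ≤ 3 * C * N := by
          have hTinv : 1/(Tn:ℝ) ≤ 1 := by
            rw [div_le_one hTn0]; exact hTn1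
          have : E + 1/(Tn:ℝ) * N ≤ 2 * N := by nlinarith [hEleN, hNnn]
          nlinarith [hC.le, hNnn]
        calc N ^ ((1:ℝ) + 1/(2*D)) ≤ C * (E + 1/(Tn:ℝ) * N) * L ^ ((1:ℝ)/D) := hnash
          _ ≤ 3*C * N * L ^ ((1:ℝ)/D) := by
              apply mul_le_mul_of_nonneg_right hbnd (by positivity)
      have h2 : N ^ ((1:ℝ)/(2*D)) ≤ 3*C * L ^ ((1:ℝ)/D) := by
        have e1 : N ^ ((1:ℝ) + 1/(2*D)) = N * N ^ ((1:ℝ)/(2*D)) := by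
          rw [Real.rpow_add hNpos, Real.rpow_one]
        rw [e1] at h1
        have := le_of_mul_le_mul_left (by
          calc N * N ^ ((1:ℝ)/(2*D)) ≤ 3*C * N * L ^ ((1:ℝ)/D) := h1
            _ = N * (3*C * L ^ ((1:ℝ)/D)) := by ring) hNpos
        exact this
      -- raise to power 2D
      have hDne : D ≠ 0 := ne_of_gt hD
      have hlhs : (N ^ ((1:ℝ)/(2*D))) ^ ((2:ℝ)*D) = N := by
        rw [← Real.rpow_mul hNnn, div_mul_cancel₀ _ (by positivity : (2:ℝ)*D ≠ 0),
          Real.rpow_one]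
      have hDD : (1:ℝ)/D * (2*D) = 2 := by field_simp [hDne]
      have hrhs : (3*C * L ^ ((1:ℝ)/D)) ^ ((2:ℝ)*D) = (3*C) ^ ((2:ℝ)*D) * L ^ 2 := by
        rw [Real.mul_rpow (by positivity) (by positivity), ← Real.rpow_mul hLnn, hDD,
          show ((2:ℝ)) = ((2:ℕ):ℝ) by norm_num, Real.rpow_natCast]
      have h3 := Real.rpow_le_rpow (by positivity) h2 (by positivity : (0:ℝ) ≤ 2*D)
      rw [hlhs, hrhs] at h3
      exact h3
  -- combine: M*N ≤ (3C)^(2D) * M * L^2 ≤ (3C)^(2D) ℓ^2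
  rw [hNscale]
  have h4 : M * L ^ 2 ≤ ℓ ^ 2 := by
    have ha := pow_le_pow_left₀ (mul_nonneg hM0.le hLnn) hMLl 2
    have hb := mul_le_mul_of_nonneg_left (mul_le_mul_of_nonneg_right hM1 (sq_nonneg L)) hM0.le
    nlinarith [ha, hb]
  calc M * N ≤ M * ((3*C) ^ ((2:ℝ)*D) * L ^ 2) := mul_le_mul_of_nonneg_left hNL hM0.le
    _ = (3*C) ^ ((2:ℝ)*D) * (M * L ^ 2) := by ring
    _ ≤ (3*C) ^ ((2:ℝ)*D) * ℓ ^ 2 := by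
        apply mul_le_mul_of_nonneg_left h4 (by positivity)

lemma mono_step (πp πc : V → ℝ) (k : V → V → ℝ) (h : V → ℝ)
    (hπc : ∀ x, 0 < πc x) (hmono : ∀ x, πp x ≤ πc x)
    (hknn : ∀ x y, 0 ≤ k x y) (hksum : ∀ x, ∑ y, k x y = 1)
    (hstat : ∀ y, ∑ x, πc x * k x y = πc y) :
    ∑ x, πp x * (act k h x) ^ 2 ≤ ∑ x, πc x * h x ^ 2 := by
  have hspec := dirichlet_spectral πc k h hπc hksum hstat
  have hdnn : 0 ≤ dirichlet (Qker πc k) πc h :=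
    dirichlet_nonneg _ _ _ (fun x => (hπc x).le) (Qker_nonneg πc k hπc hknn)
  have h1 : ∑ x, πp x * (act k h x) ^ 2 ≤ ∑ x, πc x * (act k h x) ^ 2 :=
    Finset.sum_le_sum fun x _ => mul_le_mul_of_nonneg_right (hmono x) (sq_nonneg _)
  have h2 : ∑ x, πc x * (act k h x) ^ 2 = ∑ x, πc x * (∑ y, k x y * h y) ^ 2 :=
    Finset.sum_congr rfl fun x _ => by rw [act_fin]
  have h3 : ∑ x, πc x * (∑ y, k x y * h y) ^ 2 ≤ ∑ x, πc x * h x ^ 2 := by linarith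
  linarith [h1, h2.le, h2.ge, h3]

end finlem

section kst
variable {V : Type*}

lemma Kst_self (K : ℕ → V → V → ℝ) (t : ℕ) (f : V → ℝ) : Kst K t t f = f := by
  simp [Kst]

lemma Kst_peel (K : ℕ → V → V → ℝ) {s t : ℕ} (hst : s < t) (f : V → ℝ) :
    Kst K s t f = act (K (s+1)) (Kst K (s+1) t f) := by
  unfold Kst
  obtain ⟨n, hn⟩ : ∃ n, t - s = n + 1 := ⟨t - s - 1, by omega⟩
  rw [hn, show t - (s+1) = n from by omega, List.range_succ_eq_map, List.foldr_cons,
    List.foldr_map]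
  show act (K (s + 1 + 0)) _ = _
  rw [show s + 1 + 0 = s + 1 from rfl]
  refine congrArg (act (K (s+1)))
    (congrArg (fun F : ℕ → (V → ℝ) → (V → ℝ) => List.foldr F f (List.range n)) ?_)
  funext i g'
  simp only [Nat.succ_eq_add_one]
  rw [show s + 1 + (i + 1) = s + 1 + 1 + i from by omega]

end kst


open scoped BigOperators Classical
open Filter
set_option maxHeartbeats 1000000

lemma fubini_nonneg {α β : Type*} (F : α × β → ℝ) (hnn : ∀ q, 0 ≤ F q)
    (h1 : ∀ a, Summable fun b => F (a, b)) (h2 : Summable fun a => ∑' b, F (a, b)) :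
    HasSum (fun b => ∑' a, F (a, b)) (∑' a, ∑' b, F (a, b)) := by
  have hFsum : Summable F := (summable_prod_of_nonneg hnn).mpr ⟨h1, h2⟩
  have hswap : Summable (fun q : β × α => F q.swap) :=
    ((Equiv.prodComm β α).summable_iff).mpr hFsum
  have hsummb : Summable (fun b => ∑' a, F (a, b)) :=
    ((summable_prod_of_nonneg (fun q => hnn q.swap)).mp hswap).2
  have heq : ∑' b, ∑' a, F (a, b) = ∑' a, ∑' b, F (a, b) := by
    have e1 : ∑' q : β × α, F q.swap = ∑' b, ∑' a, F (a, b) :=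
      Summable.tsum_prod' hswap ((summable_prod_of_nonneg (fun q => hnn q.swap)).mp hswap).1
    have e2 : ∑' q : β × α, F q.swap = ∑' q : α × β, F q :=
      (Equiv.prodComm β α).tsum_eq F
    have e3 : ∑' q : α × β, F q = ∑' a, ∑' b, F (a, b) := Summable.tsum_prod' hFsum h1
    rw [← e1, e2, e3]
  exact hsummb.hasSum_iff.mpr heq

lemma infinite_contra {V : Type*} [Countable V] [Infinite V]
    (K : ℕ → V → V → ℝ) (π : ℕ → V → ℝ)
    (henv : NonDecEnv K π) (hmass : 1 ≤ mass (π 1))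
    (T : ℕ) (hT : 1 ≤ T) (C D : ℝ) (hC : 0 < C) (hD : 0 < D)
    (hN : NashIneq (Qker (nmz (π T)) (K T)) (nmz (π T)) C D (T : ℝ)) : False := by
  obtain ⟨hMar, hpos, hsum, hstatH, hmon⟩ := henv
  have hTpos : (0:ℝ) < (T:ℝ) := by exact_mod_cast hT
  have hmono'' : ∀ s, 1 ≤ s → ∀ x, π 1 x ≤ π s x := by
    intro s hs x
    induction s with
    | zero => omega
    | succ n ih =>
      rcases Nat.eq_or_lt_of_le hs with h | h
      · rw [← h]
      · exact (ih (by omega)).trans (hmon n (by omega) x)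
  set σ : V → ℝ := π T with hσ
  set k : V → V → ℝ := K T with hk
  have hσpos : ∀ x, 0 < σ x := hpos T hT
  have hσsum : Summable σ := hsum T hT
  have hkm := hMar T hT
  have hknn : ∀ x y, 0 ≤ k x y := hkm.1
  have hkrow : ∀ x, HasSum (k x) 1 := hkm.2.2
  have hstat : ∀ y, HasSum (fun x => σ x * k x y) (σ y) := hstatH T hT
  have hM1 : (1:ℝ) ≤ mass σ :=
    hmass.trans (Summable.tsum_le_tsum (hmono'' T hT) (hsum 1 le_rfl) hσsum)
  have hM0 : (0:ℝ) < mass σ := lt_of_lt_of_le one_pos hM1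
  set p : V → ℝ := nmz σ with hp
  have hpx : ∀ x, p x = σ x / mass σ := fun x => rfl
  have hppos : ∀ x, 0 < p x := fun x => div_pos (hσpos x) hM0
  have hpsum : Summable p := hσsum.div_const _
  have hpstat : ∀ y, HasSum (fun x => p x * k x y) (p y) := by
    intro y
    have h1 := (hstat y).div_const (mass σ)
    have h2 : (fun x => σ x * k x y / mass σ) = fun x => p x * k x y := by
      funext x; rw [hpx]; ring
    rwa [h2] at h1
  have hadjrow : ∀ x, HasSum (fun z => adjKer p k x z) 1 := by
    intro x
    have h1 := (hpstat x).div_const (p x)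
    have h2 : (fun z => p z * k z x / p x) = fun z => adjKer p k x z := by
      funext z; rfl
    rwa [h2, div_self (hppos x).ne'] at h1
  have hadjnn : ∀ x z, 0 ≤ adjKer p k x z := fun x z =>
    div_nonneg (mul_nonneg (hppos z).le (hknn z x)) (hppos x).le
  have hQeq : ∀ x v, Qker p k x v = ∑' z, adjKer p k x z * k z v := fun x v => rfl
  have hQnn : ∀ x v, 0 ≤ Qker p k x v := fun x v =>
    tsum_nonneg fun z => mul_nonneg (hadjnn x z) (hknn z v)
  -- row sums of Q
  have hQrow : ∀ x, HasSum (fun v => Qker p k x v) 1 := by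
    intro x
    have h1 : ∀ z, Summable fun v => adjKer p k x z * k z v :=
      fun z => (hkrow z).summable.mul_left _
    have hsum1 : ∀ z, ∑' v, adjKer p k x z * k z v = adjKer p k x z := by
      intro z
      rw [tsum_mul_left, (hkrow z).tsum_eq, mul_one]
    have h2 : Summable fun z => ∑' v, adjKer p k x z * k z v := by
      rw [summable_congr hsum1]
      exact (hadjrow x).summable
    have hfub := fubini_nonneg (fun q : V × V => adjKer p k x q.1 * k q.1 q.2)
      (fun q => mul_nonneg (hadjnn x q.1) (hknn q.1 q.2)) h1 h2
    have hval : ∑' z, ∑' v, adjKer p k x z * k z v = 1 := by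
      rw [tsum_congr hsum1]
      exact (hadjrow x).tsum_eq
    rw [hval] at hfub
    exact hfub
  have hQdiag : ∀ x, Qker p k x x ≤ 1 := fun x =>
    le_hasSum (hQrow x) x (fun v _ => hQnn x v)
  -- column sums : HasSum (fun u => p u * Q u x) (p x)
  have hQcol : ∀ x, HasSum (fun u => p u * Qker p k u x) (p x) := by
    intro x
    have h1 : ∀ z, Summable fun u => p z * k z x * k z u :=
      fun z => (hkrow z).summable.mul_left _
    have hsum1 : ∀ z, ∑' u, p z * k z x * k z u = p z * k z x := by
      intro z
      rw [tsum_mul_left, (hkrow z).tsum_eq, mul_one]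
    have h2 : Summable fun z => ∑' u, p z * k z x * k z u := by
      rw [summable_congr hsum1]
      exact (hpstat x).summable
    have hfub := fubini_nonneg (fun q : V × V => p q.1 * k q.1 x * k q.1 q.2)
      (fun q => mul_nonneg (mul_nonneg (hppos q.1).le (hknn q.1 x)) (hknn q.1 q.2)) h1 h2
    have hval : ∑' z, ∑' u, p z * k z x * k z u = p x := by
      rw [tsum_congr hsum1]
      exact (hpstat x).tsum_eq
    rw [hval] at hfub
    have hueq : ∀ u, ∑' z, p z * k z x * k z u = p u * Qker p k u x := by
      intro u
      rw [hQeq, ← tsum_mul_left]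
      refine tsum_congr fun z => ?_
      rw [adjKer]
      have hpu : p u ≠ 0 := (hppos u).ne'
      field_simp
    have hfub' : HasSum (fun u => ∑' z, p z * k z x * k z u) (p x) := hfub
    rw [show (fun u => ∑' z, p z * k z x * k z u) = fun u => p u * Qker p k u x from
      funext hueq] at hfub'
    exact hfub'
  -- delta computations
  have hδ2 : ∀ x, (∑' y, p y * (delta x y) ^ 2) = p x := by
    intro x
    rw [tsum_eq_single x (fun b hb => by simp [delta, hb])]
    simp [delta]
  have hl2δ : ∀ x, l2norm p (delta x) = Real.sqrt (p x) := by
    intro x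
    rw [l2norm, hδ2]
  have hl1δ : ∀ x, l1norm p (delta x) = p x := by
    intro x
    rw [l1norm, tsum_eq_single x (fun b hb => by simp [delta, hb])]
    simp [delta]
  have hdir : ∀ x, dirichlet (Qker p k) p (delta x) = p x * (1 - Qker p k x x) := by
    intro x
    rw [dirichlet]
    have hinner : ∀ u, ∑' v, (delta x u - delta x v) ^ 2 * p u * Qker p k u v
        = (if u = x then p x * (1 - Qker p k x x) else p u * Qker p k u x) := by
      intro u
      by_cases hu : u = x
      · subst hu
        have hterm : ∀ v, (delta u u - delta u v) ^ 2 * p u * Qker p k u v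
            = p u * Qker p k u v - (if v = u then p u * Qker p k u u else 0) := by
          intro v
          by_cases hv : v = u
          · subst hv; simp [delta]
          · simp [delta, hv, Ne.symm hv]
        rw [tsum_congr hterm,
          Summable.tsum_sub ((hQrow u).summable.mul_left (p u)) ⟨_, hasSum_ite_eq u _⟩,
          tsum_mul_left, (hQrow u).tsum_eq, tsum_ite_eq]
        simp
        ring
      · have hterm : ∀ v, (delta x u - delta x v) ^ 2 * p u * Qker p k u v
            = (if v = x then p u * Qker p k u x else 0) := by
          intro v
          by_cases hv : v = x
          · subst hv; simp [delta, hu]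
          · simp [delta, hu, hv]
        rw [tsum_congr hterm, tsum_ite_eq]
        simp [hu]
    rw [tsum_congr hinner]
    have hsplit : (fun u => if u = x then p x * (1 - Qker p k x x) else p u * Qker p k u x)
        = fun u => p u * Qker p k u x + (if u = x then p x * (1 - 2 * Qker p k x x) else 0) := by
      funext u
      by_cases hu : u = x
      · subst hu; simp; ring
      · simp [hu]
    rw [hsplit, Summable.tsum_add (hQcol x).summable ⟨_, hasSum_ite_eq x _⟩,
      (hQcol x).tsum_eq, tsum_ite_eq]
    ring
  -- Nash applied to delta
  have hlow : ∀ x, ((1:ℝ)/(2*C)) ^ ((2:ℝ)*D) ≤ p x := by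
    intro x
    have hpxpos := hppos x
    have h1 := hN (delta x)
    rw [hl2δ x, hl1δ x, hdir x, Real.sq_sqrt hpxpos.le] at h1
    have hL : Real.sqrt (p x) ^ ((2:ℝ) + 1/D) = p x ^ ((1:ℝ) + 1/(2*D)) := by
      rw [Real.sqrt_eq_rpow, ← Real.rpow_mul hpxpos.le]
      congr 1
      field_simp
    rw [hL] at h1
    have hpd : (0:ℝ) ≤ p x ^ ((1:ℝ)/D) := Real.rpow_nonneg hpxpos.le _
    have hfac : p x * (1 - Qker p k x x) + 1/(T:ℝ) * p x ≤ 2 * p x := by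
      have hq := hQnn x x
      have hT1 : (1:ℝ)/(T:ℝ) ≤ 1 := by
        rw [div_le_one hTpos]
        exact_mod_cast hT
      nlinarith [hpxpos]
    have h2 : p x ^ ((1:ℝ) + 1/(2*D)) ≤ 2*C * (p x * p x ^ ((1:ℝ)/D)) := by
      calc p x ^ ((1:ℝ) + 1/(2*D))
          ≤ C * (p x * (1 - Qker p k x x) + 1/(T:ℝ) * p x) * p x ^ ((1:ℝ)/D) := h1
        _ ≤ C * (2 * p x) * p x ^ ((1:ℝ)/D) :=
            mul_le_mul_of_nonneg_right (mul_le_mul_of_nonneg_left hfac hC.le) hpd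
        _ = 2*C * (p x * p x ^ ((1:ℝ)/D)) := by ring
    have e1 : p x * p x ^ ((1:ℝ)/D)
        = p x ^ ((1:ℝ) + 1/(2*D)) * p x ^ ((1:ℝ)/(2*D)) := by
      calc p x * p x ^ ((1:ℝ)/D) = p x ^ ((1:ℝ) + 1/D) := by
            rw [Real.rpow_add hpxpos, Real.rpow_one]
        _ = p x ^ ((1:ℝ) + 1/(2*D)) * p x ^ ((1:ℝ)/(2*D)) := by
            rw [← Real.rpow_add hpxpos]
            congr 1
            field_simp
            ring
    rw [e1] at h2
    have hA : (0:ℝ) < p x ^ ((1:ℝ) + 1/(2*D)) := Real.rpow_pos_of_pos hpxpos _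
    have h3 : (1:ℝ) ≤ 2*C*(p x ^ ((1:ℝ)/(2*D))) := by
      have h2' : p x ^ ((1:ℝ) + 1/(2*D)) * 1
          ≤ p x ^ ((1:ℝ) + 1/(2*D)) * (2*C*(p x ^ ((1:ℝ)/(2*D)))) := by
        have e2 : 2*C * (p x ^ ((1:ℝ) + 1/(2*D)) * p x ^ ((1:ℝ)/(2*D)))
            = p x ^ ((1:ℝ) + 1/(2*D)) * (2*C*(p x ^ ((1:ℝ)/(2*D)))) := by ring
        rw [mul_one]
        linarith [h2, e2.le, e2.ge]
      exact le_of_mul_le_mul_left h2' hA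
    have h4 : (1:ℝ)/(2*C) ≤ p x ^ ((1:ℝ)/(2*D)) := by
      rw [div_le_iff₀ (by positivity)]
      linarith
    have h5 := Real.rpow_le_rpow (by positivity) h4 (by positivity : (0:ℝ) ≤ 2*D)
    rwa [← Real.rpow_mul hpxpos.le, show (1:ℝ)/(2*D)*(2*D) = 1 from
      div_mul_cancel₀ 1 (by positivity), Real.rpow_one] at h5
  -- contradiction with summability
  have hc : (0:ℝ) < ((1:ℝ)/(2*C)) ^ ((2:ℝ)*D) := Real.rpow_pos_of_pos (by positivity) _
  have hev : ∀ᶠ x in Filter.cofinite, p x < ((1:ℝ)/(2*C)) ^ ((2:ℝ)*D) :=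
    hpsum.tendsto_cofinite_zero.eventually_lt_const hc
  obtain ⟨x, hx⟩ := hev.exists
  exact absurd (hlow x) (not_le.mpr hx)


open scoped BigOperators Classical
set_option maxHeartbeats 2000000

theorem stmt7_fin {V : Type*} [Fintype V]
    (K : ℕ → V → V → ℝ) (π : ℕ → V → ℝ)
    (henv : NonDecEnv K π) (hπ0 : π 0 = π 1) (hmass : 1 ≤ mass (π 1))
    (T : ℕ) (hT : 1 ≤ T) (C D : ℝ) (hC : 0 < C) (hD : 0 < D)
    (hNash : ∀ t, 1 ≤ t → t ≤ T →
      NashIneq (Qker (nmz (π t)) (K t)) (nmz (π t)) C D (T : ℝ))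
    (r t : ℕ) (hrt : r ≤ t) (htT : t ≤ T) (ht1 : 1 ≤ t) (f : V → ℝ) :
    l2norm (nmz (π r)) (fun x => Kst K r t f x - integral (nmz (π r)) (Kst K r t f)) ≤
      ((4 * C * ((1 + 1 / (T : ℝ)) * (1 + (⌈(4 : ℝ) * D⌉ : ℝ))) / ((t : ℝ) - r + 1)) ^ D) *
        (mass (π t) / Real.sqrt (mass (π r))) * l1norm (nmz (π t)) f := by
  obtain ⟨hMar, hpos, hsum, hstatH, hmon⟩ := henv
  have hknn : ∀ s, 1 ≤ s → ∀ x y, 0 ≤ K s x y := fun s hs => (hMar s hs).1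
  have hksum : ∀ s, 1 ≤ s → ∀ x, ∑ y, K s x y = 1 := fun s hs x =>
    (((hMar s hs).2.2 x).unique (hasSum_fintype _)).symm
  have hstat : ∀ s, 1 ≤ s → ∀ y, ∑ x, π s x * K s x y = π s y := fun s hs y =>
    (hasSum_fintype _).unique (hstatH s hs y)
  have hpos' : ∀ s x, 0 < π s x := by
    intro s x
    cases s with
    | zero => rw [hπ0]; exact hpos 1 le_rfl x
    | succ n => exact hpos (n+1) (by omega) x
  have hmono1 : ∀ s x, π s x ≤ π (s+1) x := by
    intro s x
    cases s with
    | zero => rw [hπ0]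
    | succ n => exact hmon (n+1) (by omega) x
  have hmono' : ∀ s s', s ≤ s' → ∀ x, π s x ≤ π s' x := by
    intro s s' hss' x
    induction s' with
    | zero => rw [show s = 0 from by omega]
    | succ n ih =>
      rcases Nat.eq_or_lt_of_le hss' with h | h
      · rw [h]
      · exact (ih (by omega)).trans (hmono1 n x)
  have hMfin : ∀ s, mass (π s) = ∑ x, π s x := fun s => tsum_fintype _
  set M : ℕ → ℝ := fun s => ∑ x, π s x with hMdef
  have hM11 : (1:ℝ) ≤ M 1 := by have := hmass; rwa [hMfin 1] at this
  have hM1 : ∀ s, 1 ≤ M s := by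
    intro s
    cases s with
    | zero =>
      have : M 0 = M 1 := Finset.sum_congr rfl fun x _ => by rw [hπ0]
      rw [this]; exact hM11
    | succ n =>
      exact hM11.trans (Finset.sum_le_sum fun x _ => hmono' 1 (n+1) (by omega) x)
  set g : ℕ → V → ℝ := fun s => Kst K s t f with hgdef
  have hgt : g t = f := Kst_self K t f
  have hgpeel : ∀ s, s < t → g s = act (K (s+1)) (g (s+1)) := fun s hst => Kst_peel K hst f
  set ℓ : ℝ := ∑ x, π t x * |f x| with hldef
  have hlnn : (0:ℝ) ≤ ℓ :=
    Finset.sum_nonneg fun x _ => mul_nonneg (hpos' t x).le (abs_nonneg _)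
  -- the prefactor X
  set X : ℝ := 4 * C * ((1 + 1 / (T : ℝ)) * (1 + (⌈(4 : ℝ) * D⌉ : ℝ))) / ((t : ℝ) - r + 1)
    with hXdef
  have hTR : (1:ℝ) ≤ (T:ℝ) := by exact_mod_cast hT
  have hceil : (4:ℝ) * D ≤ (⌈(4 : ℝ) * D⌉ : ℝ) := Int.le_ceil _
  have hden : (0:ℝ) < (t : ℝ) - r + 1 := by
    have : (r:ℝ) ≤ (t:ℝ) := by exact_mod_cast hrt
    linarith
  have hX0 : 0 < X := by
    rw [hXdef]
    have h1 : (0:ℝ) < 1 + 1/(T:ℝ) := by positivity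
    have h2 : (0:ℝ) < 1 + (⌈(4 : ℝ) * D⌉ : ℝ) := by nlinarith
    exact div_pos (by positivity) hden
  rcases eq_or_lt_of_le hlnn with hl0 | hlpos
  · -- trivial case : f ≡ 0
    have hf0 : ∀ x, f x = 0 := by
      intro x
      have hterm := (Finset.sum_eq_zero_iff_of_nonneg
        (fun y (_ : y ∈ Finset.univ) =>
          mul_nonneg (hpos' t y).le (abs_nonneg (f y)))).mp hl0.symm x (Finset.mem_univ x)
      have : |f x| = 0 := by
        rcases mul_eq_zero.mp hterm with h' | h'
        · exact absurd h' (ne_of_gt (hpos' t x))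
        · exact h'
      exact abs_eq_zero.mp this
    have hg0 : ∀ d s, s + d = t → ∀ x, g s x = 0 := by
      intro d
      induction d with
      | zero => intro s hs x; rw [show s = t from by omega, hgt]; exact hf0 x
      | succ d ih =>
        intro s hs x
        rw [hgpeel s (by omega)]
        have : ∀ y, g (s+1) y = 0 := ih (s+1) (by omega)
        simp [act, this]
    have hgr : ∀ x, g r x = 0 := hg0 (t - r) r (by omega)
    have hint : integral (nmz (π r)) (g r) = 0 := by simp [integral, hgr]
    have hlhs : l2norm (nmz (π r)) (fun x => g r x - integral (nmz (π r)) (g r)) = 0 := by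
      simp [l2norm, hint, hgr]
    have hl1 : l1norm (nmz (π t)) f = 0 := by simp [l1norm, hf0]
    rw [hlhs, hl1, mul_zero]
  · -- main case
    have hl1chain : ∀ d s, s + d = t → r ≤ s → ∑ x, π s x * |g s x| ≤ ℓ := by
      intro d
      induction d with
      | zero =>
        intro s hs _
        rw [show s = t from by omega, hgt]
      | succ d ih =>
        intro s hs hrs
        have hst : s < t := by omega
        have h1 : ∑ x, π s x * |g s x| ≤ ∑ x, π (s+1) x * |g s x| :=
          Finset.sum_le_sum fun x _ => mul_le_mul_of_nonneg_right (hmono1 s x) (abs_nonneg _)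
        have h2 : ∑ x, π (s+1) x * |g s x| ≤ ∑ x, π (s+1) x * |g (s+1) x| := by
          have e1 : ∑ x, π (s+1) x * |g s x|
              = ∑ x, π (s+1) x * |∑ y, K (s+1) x y * g (s+1) y| :=
            Finset.sum_congr rfl fun x _ => by rw [hgpeel s hst, act_fin]
          rw [e1]
          exact l1_step (π (s+1)) (K (s+1)) (g (s+1)) (fun x => (hpos' (s+1) x).le)
            (hknn (s+1) (by omega)) (hstat (s+1) (by omega))
        exact (h1.trans h2).trans (ih (s+1) (by omega) (by omega))
    set NN : ℕ → ℝ := fun s => ∑ x, π s x * (g s x)^2 with hNNdef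
    have hNNnn : ∀ s, 0 ≤ NN s := fun s =>
      Finset.sum_nonneg fun x _ => mul_nonneg (hpos' s x).le (sq_nonneg _)
    have hl2 : (0:ℝ) < ℓ^2 := by positivity
    -- one-step recurrence
    have hstep : ∀ s, r ≤ s → s < t →
        NN s ≤ (1 + 1/(T:ℝ)) * NN (s+1)
          - NN (s+1) ^ ((1:ℝ) + 1/(2*D)) / (C * ℓ ^ ((1:ℝ)/D)) := by
      intro s hrs hst
      have hks := key_step (π s) (π (s+1)) (K (s+1)) C D T ℓ (g (s+1)) hC hD hT
        (hpos' (s+1)) (fun x => (hpos' s x).le) (hmono1 s) (hknn (s+1) (by omega))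
        (hksum (s+1) (by omega)) (hstat (s+1) (by omega)) (hM1 (s+1))
        (hNash (s+1) (by omega) (by omega)) hlpos
        (hl1chain (t - (s+1)) (s+1) (by omega) (by omega))
      have e1 : NN s = ∑ x, π s x * (act (K (s+1)) (g (s+1)) x)^2 :=
        Finset.sum_congr rfl fun x _ => by rw [hgpeel s hst]
      rw [e1]
      exact hks
    -- plain monotonicity
    have hmonoNN : ∀ s, s < t → NN s ≤ NN (s+1) := by
      intro s hst
      have e1 : NN s = ∑ x, π s x * (act (K (s+1)) (g (s+1)) x)^2 :=
        Finset.sum_congr rfl fun x _ => by rw [hgpeel s hst]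
      rw [e1]
      exact mono_step (π s) (π (s+1)) (K (s+1)) (g (s+1)) (hpos' (s+1)) (hmono1 s)
        (hknn (s+1) (by omega)) (hksum (s+1) (by omega)) (hstat (s+1) (by omega))
    -- base bound
    have hbase : NN t ≤ (3*C) ^ ((2:ℝ)*D) * ℓ^2 := by
      have := base_step (π t) (K t) C D T ℓ f hC hD hT (hpos' t) (hknn t ht1)
        (hksum t ht1) (hstat t ht1) (hM1 t) (hNash t ht1 htT) le_rfl
      have e1 : NN t = ∑ x, π t x * f x ^ 2 :=
        Finset.sum_congr rfl fun x _ => by rw [hgt]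
      rw [e1]; exact this
    -- z sequence
    set n : ℕ := t - r with hn
    set z : ℕ → ℝ := fun k => NN (t - k) / ℓ^2 with hz
    have hepos : (0:ℝ) < 1/(2*D) := by positivity
    have hm : 2/((1:ℝ)/(2*D)) ≤ (⌈(4 : ℝ) * D⌉ : ℝ) := by
      rw [show 2/((1:ℝ)/(2*D)) = 4*D from by field_simp; ring]
      exact hceil
    have hDne : D ≠ 0 := ne_of_gt hD
    have hlne : ℓ ≠ 0 := ne_of_gt hlpos
    have hlrpne : (0:ℝ) < ℓ ^ ((1:ℝ)/D) := Real.rpow_pos_of_pos hlpos _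
    have hiter := iterlem (1/(2*D)) C ((⌈(4 : ℝ) * D⌉ : ℝ)) T hepos hC hT hm
      (1 + 1/(T:ℝ)) rfl n (by omega) z
      (fun k => div_nonneg (hNNnn _) hl2.le)
      (by
        show NN (t - 0) / ℓ^2 ≤ (3*C) ^ (1/((1:ℝ)/(2*D)))
        rw [show t - 0 = t from rfl, div_le_iff₀ hl2, one_div_one_div]
        exact hbase)
      (fun k hk => by
        show NN (t - (k+1)) / ℓ^2 ≤ NN (t - k) / ℓ^2
        have hidx : t - k = (t - (k+1)) + 1 := by omega
        rw [hidx]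
        gcongr
        exact hmonoNN (t - (k+1)) (by omega))
      (fun k hk => by
        show NN (t - (k+1)) / ℓ^2 ≤ (1 + 1/(T:ℝ)) * (NN (t-k) / ℓ^2)
          - (NN (t-k) / ℓ^2) ^ ((1:ℝ) + 1/(2*D)) / C
        have hidx : t - k = (t - (k+1)) + 1 := by omega
        have hsb := hstep (t - (k+1)) (by omega) (by omega)
        rw [← hidx] at hsb
        have hrp : (NN (t-k) / ℓ^2) ^ ((1:ℝ) + 1/(2*D))
            = NN (t-k) ^ ((1:ℝ) + 1/(2*D)) / (ℓ^2) ^ ((1:ℝ) + 1/(2*D)) :=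
          Real.div_rpow (hNNnn _) hl2.le _
        have hl2rp : ((ℓ^2 : ℝ)) ^ ((1:ℝ) + 1/(2*D)) = ℓ^2 * ℓ ^ ((1:ℝ)/D) := by
          have e1 : ((ℓ^2) : ℝ) = ℓ ^ ((2:ℕ) : ℝ) := (Real.rpow_natCast ℓ 2).symm
          rw [e1, ← Real.rpow_mul hlpos.le,
            show ((2:ℕ) : ℝ) * ((1:ℝ) + 1/(2*D)) = ((2:ℕ):ℝ) + (1:ℝ)/D from by
              push_cast; field_simp,
            Real.rpow_add hlpos, Real.rpow_natCast]
        rw [hrp, hl2rp]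
        have target_eq : (1 + 1/(T:ℝ)) * (NN (t-k) / ℓ^2)
            - (NN (t-k) ^ ((1:ℝ) + 1/(2*D)) / (ℓ^2 * ℓ ^ ((1:ℝ)/D))) / C
            = ((1 + 1/(T:ℝ)) * NN (t-k)
              - NN (t-k) ^ ((1:ℝ) + 1/(2*D)) / (C * ℓ ^ ((1:ℝ)/D))) / ℓ^2 := by
          field_simp
        rw [target_eq]
        gcongr)
    -- translate iterlem conclusion
    have hzn : NN r / ℓ^2 ≤ (4*(1 + 1/(T:ℝ))*C*((⌈(4:ℝ)*D⌉:ℝ)+1)/((n:ℝ)+1))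
        ^ (1/((1:ℝ)/(2*D))) := by
      have h0 : z n = NN r / ℓ^2 := by
        show NN (t - n) / ℓ^2 = NN r / ℓ^2
        rw [show t - n = r from by omega]
      rw [← h0]
      exact hiter
    have hcast : ((n:ℕ) : ℝ) = (t:ℝ) - r := by
      rw [hn]
      push_cast [Nat.cast_sub hrt]
      ring
    have hXeq : 4*(1 + 1/(T:ℝ))*C*((⌈(4:ℝ)*D⌉:ℝ)+1)/((n:ℝ)+1) = X := by
      rw [hXdef, hcast]
      ring
    have hexp2D : (1:ℝ)/((1:ℝ)/(2*D)) = 2*D := one_div_one_div _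
    rw [hXeq, hexp2D] at hzn
    have hNNr : NN r ≤ X ^ ((2:ℝ)*D) * ℓ^2 := by
      rw [div_le_iff₀ hl2] at hzn
      exact hzn
    -- LHS computation
    have hMr0 : (0:ℝ) < M r := lt_of_lt_of_le one_pos (hM1 r)
    have hMt0 : (0:ℝ) < M t := lt_of_lt_of_le one_pos (hM1 t)
    have hMfin' : ∀ s, mass (π s) = M s := fun s => tsum_fintype _
    have hprx : ∀ x, nmz (π r) x = π r x / M r := fun x => nmz_fin (π r) x
    have hptx : ∀ x, nmz (π t) x = π t x / M t := fun x => nmz_fin (π t) x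
    have hprsum : ∑ x, nmz (π r) x = 1 := by
      rw [Finset.sum_congr rfl fun x (_ : x ∈ Finset.univ) => hprx x, ← Finset.sum_div]
      exact div_self hMr0.ne'
    set mb : ℝ := integral (nmz (π r)) (g r) with hmb
    have hmb : mb = ∑ x, nmz (π r) x * g r x := tsum_fintype _
    have hvar : ∑ x, nmz (π r) x * (g r x - mb)^2 ≤ ∑ x, nmz (π r) x * (g r x)^2 := by
      have e : ∀ x ∈ Finset.univ, nmz (π r) x * (g r x - mb)^2
          = nmz (π r) x * (g r x)^2 - 2*mb*(nmz (π r) x * g r x) + mb^2 * nmz (π r) x :=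
        fun x _ => by ring
      have expand : ∑ x, nmz (π r) x * (g r x - mb)^2
          = ∑ x, nmz (π r) x * (g r x)^2 - 2*mb*(∑ x, nmz (π r) x * g r x)
            + mb^2 * (∑ x, nmz (π r) x) := by
        rw [Finset.sum_congr rfl e, Finset.sum_add_distrib, Finset.sum_sub_distrib,
          ← Finset.mul_sum, ← Finset.mul_sum]
      rw [expand, hprsum, ← hmb]
      nlinarith [sq_nonneg mb]
    have hsec : ∑ x, nmz (π r) x * (g r x)^2 = NN r / M r := by
      calc ∑ x, nmz (π r) x * (g r x)^2 = ∑ x, π r x * (g r x)^2 / M r :=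
          Finset.sum_congr rfl fun x _ => by rw [hprx x]; ring
        _ = NN r / M r := by rw [← Finset.sum_div]
    have hl1t : l1norm (nmz (π t)) f = ℓ / M t := by
      rw [l1norm, tsum_fintype]
      calc ∑ x, nmz (π t) x * |f x| = ∑ x, π t x * |f x| / M t :=
          Finset.sum_congr rfl fun x _ => by rw [hptx x]; ring
        _ = ℓ / M t := by rw [← Finset.sum_div]
    have hXD : (0:ℝ) ≤ X ^ D := Real.rpow_nonneg hX0.le D
    have hsqX : Real.sqrt (X ^ ((2:ℝ)*D)) = X ^ D := by
      rw [show (2:ℝ)*D = D + D from by ring, Real.rpow_add hX0, ← pow_two]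
      exact Real.sqrt_sq hXD
    have hsqMr : (0:ℝ) < Real.sqrt (M r) := Real.sqrt_pos.mpr hMr0
    have goal_rhs : X ^ D * (mass (π t) / Real.sqrt (mass (π r))) * l1norm (nmz (π t)) f
        = X ^ D * ℓ / Real.sqrt (M r) := by
      rw [hMfin' t, hMfin' r, hl1t]
      field_simp
    rw [goal_rhs]
    show l2norm (nmz (π r)) (fun x => g r x - mb) ≤ X ^ D * ℓ / Real.sqrt (M r)
    calc l2norm (nmz (π r)) (fun x => g r x - mb)
        = Real.sqrt (∑ x, nmz (π r) x * (g r x - mb)^2) := by rw [l2norm, tsum_fintype]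
      _ ≤ Real.sqrt (NN r / M r) := Real.sqrt_le_sqrt (by rw [← hsec]; exact hvar)
      _ ≤ Real.sqrt (X ^ ((2:ℝ)*D) * ℓ^2 / M r) := Real.sqrt_le_sqrt (by gcongr)
      _ = Real.sqrt (X ^ ((2:ℝ)*D) * ℓ^2) / Real.sqrt (M r) :=
          Real.sqrt_div (by positivity) _
      _ = X ^ D * ℓ / Real.sqrt (M r) := by
          rw [Real.sqrt_mul (by positivity) (ℓ^2), Real.sqrt_sq hlpos.le, hsqX]

/-- Theorem: `ℓ¹ → ℓ²` bound under Nash inequalities.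
If `π_1(V) ≥ 1` and each `(Q_t, π̃_t)`, `1 ≤ t ≤ T`, satisfies `N(C,D,T)`, then for
`0 ≤ r ≤ t ≤ T` and every `f : V → ℝ`,
`‖K_{r,t} f − π̃_r(K_{r,t} f)‖_{ℓ²(π̃_r)} ≤ (4CB/(t−r+1))^D (π_t(V)/sqrt(π_r(V))) ‖f‖_{ℓ¹(π̃_t)}`,
with `B = (1 + 1/T)(1 + ⌈4D⌉)` and `π_0 := π_1`. -/
theorem stmt7 {V : Type*} [Countable V]
    (K : ℕ → V → V → ℝ) (π : ℕ → V → ℝ)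
    (henv : NonDecEnv K π) (hπ0 : π 0 = π 1) (hmass : 1 ≤ mass (π 1))
    (T : ℕ) (hT : 1 ≤ T) (C D : ℝ) (hC : 0 < C) (hD : 0 < D)
    (hNash : ∀ t, 1 ≤ t → t ≤ T →
      NashIneq (Qker (nmz (π t)) (K t)) (nmz (π t)) C D (T : ℝ))
    (r t : ℕ) (hrt : r ≤ t) (htT : t ≤ T) (f : V → ℝ) :
    l2norm (nmz (π r)) (fun x => Kst K r t f x - integral (nmz (π r)) (Kst K r t f)) ≤
      ((4 * C * ((1 + 1 / (T : ℝ)) * (1 + (⌈(4 : ℝ) * D⌉ : ℝ))) / ((t : ℝ) - r + 1)) ^ D) *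
        (mass (π t) / Real.sqrt (mass (π r))) * l1norm (nmz (π t)) f := by
  classical
  rcases finite_or_infinite V with hfin | hinf
  · haveI : Fintype V := Fintype.ofFinite V
    rcases Nat.eq_zero_or_pos t with ht0 | ht1
    · subst ht0
      have hr0 : r = 0 := by omega
      subst hr0
      have h11 := stmt7_fin K π henv hπ0 hmass T hT C D hC hD hNash 1 1 le_rfl hT le_rfl f
      simp only [Kst_self] at h11 ⊢
      rw [hπ0]
      norm_num at h11 ⊢
      exact h11
    · exact stmt7_fin K π henv hπ0 hmass T hT C D hC hD hNash r t hrt htT ht1 f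
  · exact absurd (infinite_contra K π henv hmass T hT C D hC hD (hNash T hT le_rfl))
      not_false
end

section
/- Let {(K_t, π_t)}_{t≥1} be a non-decreasing finite environment on a countable discrete set V with π_1(V) ≥ 1, and let (α_t)_{t≥1} be positive reals such that for every t ≥ 1, every q ≥ 2 and every p with 1 ≤ p ≤ q(1 + α_t), one has ‖K_t f‖_{ℓ^p(π̃_t)} ≤ ‖f‖_{ℓ^q(π̃_t)} for all f : V → ℝ. Then for every q ≥ 2 and every t ≥ 1, setting q_t := q·∏_{s=1}^t (1 + α_s), one has for every p with 1 ≤ p ≤ q_t and every f ∈ ℓ^q(π_t): ‖K_{0,t} f‖_{ℓ^p(π̃_1)} ≤ ‖f‖_{ℓ^q(π̃_t)} · π_t(V)^{1/q} / π_1(V)^{1/q_t}. -/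
open scoped BigOperators Classical
open Filter

noncomputable section

/-- `ℓ^q(p)`-norm with real exponent `q`: `(∑_x p(x)|f(x)|^q)^{1/q}`. -/
def lpnorm {V : Type*} (p : V → ℝ) (q : ℝ) (f : V → ℝ) : ℝ :=
  (∑' x, p x * |f x| ^ q) ^ (1 / q)

/-- Membership in `ℓ^q(π)` with real exponent. -/
def MemLq {V : Type*} (π : V → ℝ) (q : ℝ) (f : V → ℝ) : Prop :=
  Summable (fun x => π x * |f x| ^ q)

end


section AuxProof

open scoped Topology

open Filter

variable {V : Type*}

private lemma aux_Kst_self (K : ℕ → V → V → ℝ) (f : V → ℝ) {s t : ℕ} (h : t ≤ s) :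
    Kst K s t f = f := by
  unfold Kst
  rw [Nat.sub_eq_zero_of_le h]
  rfl

private lemma aux_Kst_succ (K : ℕ → V → V → ℝ) (f : V → ℝ) {s t : ℕ} (h : s < t) :
    Kst K s t f = act (K (s + 1)) (Kst K (s + 1) t f) := by
  unfold Kst
  obtain ⟨n, hn⟩ : ∃ n, t - s = n + 1 := ⟨t - (s + 1), by omega⟩
  have hn' : t - (s + 1) = n := by omega
  rw [hn, hn', List.range_succ_eq_map, List.foldr_cons, List.foldr_map]
  have hfun : (fun (x : ℕ) (y : V → ℝ) => act (K (s + 1 + x.succ)) y) =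
      (fun i (g : V → ℝ) => act (K (s + 1 + 1 + i)) g) := by
    funext i g
    have h2 : s + 1 + i.succ = s + 1 + 1 + i := by omega
    rw [h2]
  rw [hfun]

private lemma aux_row_summable {k h g : V → ℝ} (hk : ∀ y, 0 ≤ k y) (hg : ∀ y, |g y| ≤ h y)
    (hh : Summable fun y => k y * h y) : Summable fun y => k y * g y := by
  apply Summable.of_norm_bounded hh
  intro y
  rw [Real.norm_eq_abs, abs_mul, abs_of_nonneg (hk y)]
  exact mul_le_mul_of_nonneg_left (hg y) (hk y)

private lemma aux_act_abs_le {k : V → ℝ} (hk : ∀ y, 0 ≤ k y) {g h : V → ℝ}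
    (hg : ∀ y, |g y| ≤ h y) (hh : Summable fun y => k y * h y) :
    |∑' y, k y * g y| ≤ ∑' y, k y * h y := by
  have hs := aux_row_summable hk hg hh
  have habs : Summable fun y => ‖k y * g y‖ := by
    simpa only [Real.norm_eq_abs] using hs.abs
  have h1 : ‖∑' y, k y * g y‖ ≤ ∑' y, ‖k y * g y‖ := norm_tsum_le_tsum_norm habs
  simp only [Real.norm_eq_abs] at h1
  calc |∑' y, k y * g y| ≤ ∑' y, |k y * g y| := h1
    _ ≤ ∑' y, k y * h y := by
        apply Summable.tsum_le_tsum _ hs.abs hh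
        intro y
        rw [abs_mul, abs_of_nonneg (hk y)]
        exact mul_le_mul_of_nonneg_left (hg y) (hk y)

/-- A Markov chain composition of bounded functions is bounded. -/
private lemma aux_Kst_bound (K : ℕ → V → V → ℝ) (hMar : ∀ u, 1 ≤ u → IsMarkov (K u))
    {f : V → ℝ} {C : ℝ} (hC0 : 0 ≤ C) (hC : ∀ x, |f x| ≤ C) (t : ℕ) :
    ∀ n s, t - s = n → ∀ x, |Kst K s t f x| ≤ C := by
  intro n
  induction n with
  | zero =>
    intro s hs x
    rw [aux_Kst_self K f (by omega)]
    exact hC x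
  | succ n ih =>
    intro s hs x
    have hst : s < t := by omega
    rw [aux_Kst_succ K f hst]
    have hMs := hMar (s + 1) (by omega)
    have hsumC : Summable fun y => K (s + 1) x y * C := ((hMs.2.2 x).summable).mul_right C
    have h1 := aux_act_abs_le (k := K (s + 1) x) (fun y => hMs.1 x y)
      (ih (s + 1) (by omega)) hsumC
    calc |act (K (s + 1)) (Kst K (s + 1) t f) x| ≤ ∑' y, K (s + 1) x y * C := h1
      _ = C := by rw [tsum_mul_right, (hMs.2.2 x).tsum_eq, one_mul]

private lemma aux_K_le {K : V → V → ℝ} {π : V → ℝ} (hK0 : ∀ a b, 0 ≤ K a b)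
    (hπ : ∀ z, 0 < π z) (hst : ∀ y, HasSum (fun z => π z * K z y) (π y)) (x y : V) :
    K x y ≤ π y / π x := by
  have h := le_hasSum (hst y) x (fun j _ => mul_nonneg (hπ j).le (hK0 j y))
  rw [le_div_iff₀ (hπ x), mul_comm]
  exact h

private lemma aux_row_summable_of_meas {K : V → V → ℝ} {π h : V → ℝ}
    (hK0 : ∀ a b, 0 ≤ K a b) (hπ : ∀ z, 0 < π z)
    (hst : ∀ y, HasSum (fun z => π z * K z y) (π y))
    (hh0 : ∀ y, 0 ≤ h y) (hsum : Summable fun y => π y * h y) (x : V) :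
    Summable fun y => K x y * h y := by
  apply Summable.of_nonneg_of_le (fun y => mul_nonneg (hK0 x y) (hh0 y)) _
    (hsum.div_const (π x))
  intro y
  calc K x y * h y ≤ (π y / π x) * h y :=
        mul_le_mul_of_nonneg_right (aux_K_le hK0 hπ hst x y) (hh0 y)
    _ = (π y * h y) / π x := by ring

private lemma aux_act_stationary {K : V → V → ℝ} {π : V → ℝ}
    (hK0 : ∀ a b, 0 ≤ K a b) (hπ : ∀ z, 0 < π z)
    (hst : ∀ y, HasSum (fun z => π z * K z y) (π y))
    {h : V → ℝ} (hh0 : ∀ y, 0 ≤ h y) (hsum : Summable fun y => π y * h y) :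
    Summable (fun x => π x * act K h x) := by
  set F : V → V → ℝ := fun x y => π x * (K x y * h y) with hF
  have hcol : ∀ y, HasSum (fun x => F x y) (π y * h y) := by
    intro y
    have h1 := (hst y).mul_right (h y)
    have h2 : (fun z => π z * K z y * h y) = fun z => F z y := by
      funext z; simp only [hF]; ring
    rwa [h2] at h1
  have hnn : 0 ≤ fun p : V × V => F p.2 p.1 := by
    intro p
    exact mul_nonneg (hπ _).le (mul_nonneg (hK0 _ _) (hh0 _))
  have hswap : Summable (fun p : V × V => F p.2 p.1) := by
    rw [summable_prod_of_nonneg hnn]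
    refine ⟨fun y => (hcol y).summable, ?_⟩
    exact hsum.congr fun y => ((hcol y).tsum_eq).symm
  have hunc : Summable (fun p : V × V => F p.1 p.2) := by
    have := (Equiv.prodComm V V).summable_iff (f := fun p : V × V => F p.1 p.2)
    exact this.mp hswap
  have hrows := (summable_prod_of_nonneg
    (f := fun p : V × V => F p.1 p.2)
    (fun p => mul_nonneg (hπ _).le (mul_nonneg (hK0 _ _) (hh0 _)))).mp hunc
  have heq : (fun x => ∑' y, F x y) = fun x => π x * act K h x := by
    funext x
    simp only [hF, act]
    rw [tsum_mul_left]
  rw [← heq]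
  exact hrows.2

private lemma aux_lpnorm_nmz (π : V → ℝ) (r : ℝ) (g : V → ℝ) :
    lpnorm (nmz π) r g = ((∑' x, π x * |g x| ^ r) / mass π) ^ (1 / r) := by
  unfold lpnorm nmz
  rw [← tsum_div_const]
  refine congrArg (· ^ (1 / r)) (tsum_congr fun x => by ring)

private lemma aux_lpnorm_nonneg {p : V → ℝ} {r : ℝ} {g : V → ℝ} (hp : ∀ x, 0 ≤ p x) :
    0 ≤ lpnorm p r g :=
  Real.rpow_nonneg
    (tsum_nonneg fun x => mul_nonneg (hp x) (Real.rpow_nonneg (abs_nonneg _) r)) _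

private lemma aux_meas_change {π π' : V → ℝ} {r : ℝ} (hr : 0 < r)
    (hM : 0 < mass π) (hM' : 0 < mass π')
    (hπ0 : ∀ x, 0 ≤ π x) (hle : ∀ x, π x ≤ π' x) (g : V → ℝ)
    (hs : Summable fun x => π' x * |g x| ^ r) :
    lpnorm (nmz π) r g ≤ (mass π' / mass π) ^ (1 / r) * lpnorm (nmz π') r g := by
  rw [aux_lpnorm_nmz, aux_lpnorm_nmz]
  have hA'0 : 0 ≤ ∑' x, π' x * |g x| ^ r :=
    tsum_nonneg fun x => mul_nonneg ((hπ0 x).trans (hle x)) (Real.rpow_nonneg (abs_nonneg _) r)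
  have hAle : (∑' x, π x * |g x| ^ r) ≤ ∑' x, π' x * |g x| ^ r := by
    apply Summable.tsum_le_tsum _ _ hs
    · intro x
      exact mul_le_mul_of_nonneg_right (hle x) (Real.rpow_nonneg (abs_nonneg _) r)
    · apply Summable.of_nonneg_of_le
        (fun x => mul_nonneg (hπ0 x) (Real.rpow_nonneg (abs_nonneg _) r)) _ hs
      intro x
      exact mul_le_mul_of_nonneg_right (hle x) (Real.rpow_nonneg (abs_nonneg _) r)
  have hA0 : 0 ≤ ∑' x, π x * |g x| ^ r :=
    tsum_nonneg fun x => mul_nonneg (hπ0 x) (Real.rpow_nonneg (abs_nonneg _) r)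
  rw [← Real.mul_rpow (by positivity) (by positivity)]
  apply Real.rpow_le_rpow (by positivity) _ (by positivity)
  have heq : mass π' / mass π * ((∑' x, π' x * |g x| ^ r) / mass π') =
      (∑' x, π' x * |g x| ^ r) / mass π := by
    field_simp
  rw [heq]
  exact (div_le_div_iff_of_pos_right hM).mpr hAle

end AuxProof

section AuxProof2

open Filter

variable {V : Type*}

private def rexp (α : ℕ → ℝ) (q : ℝ) (t s : ℕ) : ℝ :=
  q * ∏ u ∈ Finset.Icc (s + 1) t, (1 + α u)

private lemma rexp_zero (α : ℕ → ℝ) (q : ℝ) (t : ℕ) :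
    rexp α q t 0 = q * ∏ s ∈ Finset.Icc 1 t, (1 + α s) := rfl

private lemma rexp_top (α : ℕ → ℝ) (q : ℝ) (t : ℕ) : rexp α q t t = q := by
  unfold rexp
  rw [Finset.Icc_eq_empty (by omega), Finset.prod_empty, mul_one]

private lemma rexp_ge {α : ℕ → ℝ} (hα : ∀ u, 1 ≤ u → 0 < α u) {q : ℝ} (hq : 2 ≤ q)
    (t s : ℕ) : 2 ≤ rexp α q t s := by
  unfold rexp
  refine le_trans hq (le_mul_of_one_le_right (by linarith) ?_)
  calc (1:ℝ) = ∏ u ∈ Finset.Icc (s + 1) t, 1 := by rw [Finset.prod_const_one]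
    _ ≤ ∏ u ∈ Finset.Icc (s + 1) t, (1 + α u) := by
        apply Finset.prod_le_prod (fun i _ => zero_le_one)
        intro u hu
        have hu1 : 1 ≤ u := by have := (Finset.mem_Icc.mp hu).1; omega
        linarith [hα u hu1]

private lemma rexp_rec {α : ℕ → ℝ} (q : ℝ) {t s : ℕ} (h : s < t) :
    rexp α q t s = rexp α q t (s + 1) * (1 + α (s + 1)) := by
  unfold rexp
  have hins : Finset.Icc (s + 1) t = insert (s + 1) (Finset.Icc (s + 2) t) := by
    ext u
    simp only [Finset.mem_Icc, Finset.mem_insert]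
    omega
  rw [hins, Finset.prod_insert (by simp only [Finset.mem_Icc, not_and, not_le]; omega)]
  ring

private lemma rexp_anti {α : ℕ → ℝ} (hα : ∀ u, 1 ≤ u → 0 < α u) {q : ℝ} (hq : 2 ≤ q)
    {t s : ℕ} (h : s < t) : rexp α q t (s + 1) ≤ rexp α q t s := by
  rw [rexp_rec q h]
  have h1 : 0 < α (s + 1) := hα (s + 1) (by omega)
  have h2 : (0:ℝ) < rexp α q t (s + 1) := by linarith [rexp_ge hα hq t (s + 1)]
  nlinarith

private lemma aux_bounded
    (K : ℕ → V → V → ℝ) (π : ℕ → V → ℝ)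
    (henv : NonDecEnv K π) (hmass : 1 ≤ mass (π 1))
    (α : ℕ → ℝ) (hα : ∀ t, 1 ≤ t → 0 < α t)
    (hHC : ∀ t, 1 ≤ t → ∀ q : ℝ, 2 ≤ q → ∀ p : ℝ, 1 ≤ p → p ≤ q * (1 + α t) →
      ∀ f : V → ℝ, lpnorm (nmz (π t)) p (act (K t) f) ≤ lpnorm (nmz (π t)) q f)
    (q : ℝ) (hq : 2 ≤ q) (t : ℕ) (ht : 1 ≤ t)
    (p : ℝ) (hp1 : 1 ≤ p) (hp : p ≤ rexp α q t 0)
    (f : V → ℝ) (C : ℝ) (hC0 : 0 ≤ C) (hC : ∀ x, |f x| ≤ C) :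
    lpnorm (nmz (π 1)) p (Kst K 0 t f) ≤
      lpnorm (nmz (π t)) q f * mass (π t) ^ (1 / q) /
        mass (π 1) ^ (1 / rexp α q t 0) := by
  obtain ⟨hMar, hpos, hsum, hst, hmono⟩ := henv
  -- masses
  have hπmono : ∀ s u, 1 ≤ s → s ≤ u → ∀ x, π s x ≤ π u x := by
    intro s u hs hsu x
    induction u, hsu using Nat.le_induction with
    | base => exact le_rfl
    | succ u hu ih => exact ih.trans (hmono u (by omega) x)
  have hMle : ∀ s u, 1 ≤ s → s ≤ u → mass (π s) ≤ mass (π u) := fun s u hs hsu =>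
    Summable.tsum_le_tsum (hπmono s u hs hsu) (hsum s hs) (hsum u (hs.trans hsu))
  have hM1 : ∀ s, 1 ≤ s → 1 ≤ mass (π s) := fun s hs => hmass.trans (hMle 1 s le_rfl hs)
  have hMpos : ∀ s, 1 ≤ s → 0 < mass (π s) := fun s hs => lt_of_lt_of_le one_pos (hM1 s hs)
  have hr2 : ∀ s, 2 ≤ rexp α q t s := rexp_ge hα hq t
  have hrpos : ∀ s, 0 < rexp α q t s := fun s => by linarith [hr2 s]
  have hKb : ∀ s x, |Kst K s t f x| ≤ C := fun s x =>
    aux_Kst_bound K hMar hC0 hC t (t - s) s rfl x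
  have hnmz0 : ∀ s, 1 ≤ s → ∀ x, 0 ≤ nmz (π s) x := fun s hs x =>
    div_nonneg (hpos s hs x).le (hMpos s hs).le
  have hF0 : 0 ≤ lpnorm (nmz (π t)) q f := aux_lpnorm_nonneg (hnmz0 t ht)
  have key : ∀ n, n ≤ t - 1 →
      lpnorm (nmz (π (t - n))) (rexp α q t (t - n)) (Kst K (t - n) t f) ≤
        lpnorm (nmz (π t)) q f * mass (π t) ^ (1 / q) /
          mass (π (t - n)) ^ (1 / rexp α q t (t - n)) := by
    intro n
    induction n with
    | zero =>
      intro _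
      simp only [Nat.sub_zero]
      rw [aux_Kst_self K f le_rfl, rexp_top, mul_div_assoc, div_self
        (ne_of_gt (Real.rpow_pos_of_pos (hMpos t ht) _)), mul_one]
    | succ n ih =>
      intro hn1
      have hs1 : 1 ≤ t - (n + 1) := by omega
      set s := t - (n + 1) with hsdef
      have hts : t - n = s + 1 := by omega
      have hst' : s < t := by omega
      have hs1t : s + 1 ≤ t := by omega
      have ihs := ih (by omega)
      rw [hts] at ihs
      have hHCs := hHC (s + 1) (by omega) (rexp α q t (s + 1)) (hr2 (s + 1))
        (rexp α q t s) (by linarith [hr2 s]) (le_of_eq (rexp_rec q hst'))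
        (Kst K (s + 1) t f)
      rw [← aux_Kst_succ K f hst'] at hHCs
      have hsum' : Summable fun x => π (s + 1) x * |Kst K s t f x| ^ (rexp α q t s) := by
        apply Summable.of_nonneg_of_le _ _ (((hsum (s + 1) (by omega))).mul_right
          (C ^ rexp α q t s))
        · intro x
          exact mul_nonneg (hpos (s + 1) (by omega) x).le
            (Real.rpow_nonneg (abs_nonneg _) _)
        · intro x
          exact mul_le_mul_of_nonneg_left
            (Real.rpow_le_rpow (abs_nonneg _) (hKb s x) (hrpos s).le)
            (hpos (s + 1) (by omega) x).le
      have hmc := aux_meas_change (hrpos s) (hMpos s hs1) (hMpos (s + 1) (by omega))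
        (fun x => (hpos s hs1 x).le) (hπmono s (s + 1) hs1 (by omega)) _ hsum'
      have hchain : lpnorm (nmz (π s)) (rexp α q t s) (Kst K s t f) ≤
          (mass (π (s + 1)) / mass (π s)) ^ (1 / rexp α q t s) *
            (lpnorm (nmz (π t)) q f * mass (π t) ^ (1 / q) /
              mass (π (s + 1)) ^ (1 / rexp α q t (s + 1))) :=
        hmc.trans (mul_le_mul_of_nonneg_left (hHCs.trans ihs)
          (Real.rpow_nonneg (div_nonneg (hMpos (s + 1) (by omega)).le (hMpos s hs1).le) _))
      refine hchain.trans ?_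
      have h1 : (mass (π (s + 1)) / mass (π s)) ^ (1 / rexp α q t s) =
          mass (π (s + 1)) ^ (1 / rexp α q t s) / mass (π s) ^ (1 / rexp α q t s) :=
        Real.div_rpow (hMpos (s + 1) (by omega)).le (hMpos s hs1).le _
      have h2 : mass (π (s + 1)) ^ (1 / rexp α q t s) ≤
          mass (π (s + 1)) ^ (1 / rexp α q t (s + 1)) :=
        Real.rpow_le_rpow_of_exponent_le (hM1 (s + 1) (by omega))
          (one_div_le_one_div_of_le (hrpos (s + 1)) (rexp_anti hα hq hst'))
      set D := lpnorm (nmz (π t)) q f * mass (π t) ^ (1 / q) with hD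
      have hD0 : 0 ≤ D := mul_nonneg hF0 (Real.rpow_nonneg (hMpos t ht).le _)
      set a := mass (π (s + 1)) ^ (1 / rexp α q t s)
      set b := mass (π (s + 1)) ^ (1 / rexp α q t (s + 1)) with hb
      set c := mass (π s) ^ (1 / rexp α q t s) with hc
      have hbpos : 0 < b := Real.rpow_pos_of_pos (hMpos (s + 1) (by omega)) _
      have hcpos : 0 < c := Real.rpow_pos_of_pos (hMpos s hs1) _
      rw [h1]
      calc a / c * (D / b) = D * (a / b) / c := by ring
        _ ≤ D * 1 / c := by
            apply (div_le_div_iff_of_pos_right hcpos).mpr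
            exact mul_le_mul_of_nonneg_left (div_le_one_of_le₀ h2 hbpos.le) hD0
        _ = D / c := by rw [mul_one]
  -- final step
  have hkey1 := key (t - 1) le_rfl
  have htt : t - (t - 1) = 1 := by omega
  rw [htt] at hkey1
  have h0t : 0 < t := ht
  have hfin := hHC 1 le_rfl (rexp α q t 1) (hr2 1) p hp1
    (by rw [← rexp_rec q h0t]; exact hp) (Kst K 1 t f)
  have hK0eq : Kst K 0 t f = act (K 1) (Kst K 1 t f) := aux_Kst_succ K f h0t
  rw [← hK0eq] at hfin
  refine hfin.trans (hkey1.trans ?_)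
  have hM1pos : 0 < mass (π 1) := hMpos 1 le_rfl
  have hexp : mass (π 1) ^ (1 / rexp α q t 0) ≤ mass (π 1) ^ (1 / rexp α q t 1) :=
    Real.rpow_le_rpow_of_exponent_le (hM1 1 le_rfl)
      (one_div_le_one_div_of_le (hrpos 1) (rexp_anti hα hq h0t))
  exact div_le_div_of_nonneg_left
    (mul_nonneg hF0 (Real.rpow_nonneg (hMpos t ht).le _))
    (Real.rpow_pos_of_pos hM1pos _) hexp

end AuxProof2

open scoped Topology

/-- Theorem: hypercontractivity in a non-decreasing environment.
Assume `π_1(V) ≥ 1` and for every `t ≥ 1`, `q ≥ 2` and `1 ≤ p ≤ q(1 + α_t)` one has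
`‖K_t f‖_{ℓ^p(π̃_t)} ≤ ‖f‖_{ℓ^q(π̃_t)}`. Then, with `q_t = q ∏_{s=1}^t (1 + α_s)`,
for every `1 ≤ p ≤ q_t` and `f ∈ ℓ^q(π_t)`,
`‖K_{0,t} f‖_{ℓ^p(π̃_1)} ≤ ‖f‖_{ℓ^q(π̃_t)} π_t(V)^{1/q} / π_1(V)^{1/q_t}`. -/
theorem stmt12 {V : Type*} [Countable V]
    (K : ℕ → V → V → ℝ) (π : ℕ → V → ℝ)
    (henv : NonDecEnv K π) (hπ0 : π 0 = π 1) (hmass : 1 ≤ mass (π 1))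
    (α : ℕ → ℝ) (hα : ∀ t, 1 ≤ t → 0 < α t)
    (hHC : ∀ t, 1 ≤ t → ∀ q : ℝ, 2 ≤ q → ∀ p : ℝ, 1 ≤ p → p ≤ q * (1 + α t) →
      ∀ f : V → ℝ, lpnorm (nmz (π t)) p (act (K t) f) ≤ lpnorm (nmz (π t)) q f)
    (q : ℝ) (hq : 2 ≤ q) (t : ℕ) (ht : 1 ≤ t)
    (p : ℝ) (hp1 : 1 ≤ p) (hp : p ≤ q * ∏ s ∈ Finset.Icc 1 t, (1 + α s))
    (f : V → ℝ) (hf : MemLq (π t) q f) :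
    lpnorm (nmz (π 1)) p (Kst K 0 t f) ≤
      lpnorm (nmz (π t)) q f * mass (π t) ^ (1 / q) /
        mass (π 1) ^ (1 / (q * ∏ s ∈ Finset.Icc 1 t, (1 + α s))) := by
  classical
  have hMar := henv.1
  have hpos := henv.2.1
  have hsum := henv.2.2.1
  have hst := henv.2.2.2.1
  have hmono := henv.2.2.2.2
  have hπmono : ∀ s u, 1 ≤ s → s ≤ u → ∀ x, π s x ≤ π u x := by
    intro s u hs hsu x
    induction u, hsu using Nat.le_induction with
    | base => exact le_rfl
    | succ u hu ih => exact ih.trans (hmono u (by omega) x)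
  have hMle : ∀ s u, 1 ≤ s → s ≤ u → mass (π s) ≤ mass (π u) := fun s u hs hsu =>
    Summable.tsum_le_tsum (hπmono s u hs hsu) (hsum s hs) (hsum u (hs.trans hsu))
  have hM1 : ∀ s, 1 ≤ s → 1 ≤ mass (π s) := fun s hs => hmass.trans (hMle 1 s le_rfl hs)
  have hMpos : ∀ s, 1 ≤ s → 0 < mass (π s) := fun s hs => lt_of_lt_of_le one_pos (hM1 s hs)
  have hnmz0 : ∀ s, 1 ≤ s → ∀ x, 0 ≤ nmz (π s) x := fun s hs x =>
    div_nonneg (hpos s hs x).le (hMpos s hs).le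
  have hp0 : 0 < p := by linarith
  have hq0 : 0 < q := by linarith
  -- the right-hand side constant
  set Cst := lpnorm (nmz (π t)) q f * mass (π t) ^ (1 / q) /
      mass (π 1) ^ (1 / (q * ∏ s ∈ Finset.Icc 1 t, (1 + α s))) with hCst
  have hF0 : 0 ≤ lpnorm (nmz (π t)) q f := aux_lpnorm_nonneg (hnmz0 t ht)
  have hCst0 : 0 ≤ Cst :=
    div_nonneg (mul_nonneg hF0 (Real.rpow_nonneg (hMpos t ht).le _))
      (Real.rpow_nonneg (hMpos 1 le_rfl).le _)
  -- truncations
  set fN : ℕ → V → ℝ := fun N x => if |f x| ≤ (N : ℝ) then f x else 0 with hfN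
  have hfNb : ∀ N x, |fN N x| ≤ (N : ℝ) := by
    intro N x
    simp only [hfN]
    split
    · assumption
    · simp
  have hfNf : ∀ N x, |fN N x| ≤ |f x| := by
    intro N x
    simp only [hfN]
    split
    · exact le_rfl
    · simp [abs_nonneg]
  -- ℓ¹ bound from ℓ^q membership
  have hf1 : Summable fun x => π t x * |f x| := by
    apply Summable.of_nonneg_of_le
      (fun x => mul_nonneg (hpos t ht x).le (abs_nonneg _)) _ ((hsum t ht).add hf)
    intro x
    have habs : |f x| ≤ 1 + |f x| ^ q := by
      rcases le_or_gt (|f x|) 1 with h | h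
      · have : (0:ℝ) ≤ |f x| ^ q := Real.rpow_nonneg (abs_nonneg _) q
        linarith
      · have h2 : |f x| ≤ |f x| ^ q := by
          calc |f x| = |f x| ^ (1:ℝ) := (Real.rpow_one _).symm
            _ ≤ |f x| ^ q := Real.rpow_le_rpow_of_exponent_le h.le (by linarith)
        linarith
    calc π t x * |f x| ≤ π t x * (1 + |f x| ^ q) :=
          mul_le_mul_of_nonneg_left habs (hpos t ht x).le
      _ = π t x + π t x * |f x| ^ q := by ring
  -- the nonneg dominating chain h_s = K_{s,t}|f|
  set Fa : V → ℝ := fun x => |f x| with hFa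
  have hFa0 : ∀ x, 0 ≤ Fa x := fun x => abs_nonneg _
  have hKst_nonneg : ∀ n s, t - s = n → ∀ x, 0 ≤ Kst K s t Fa x := by
    intro n
    induction n with
    | zero =>
      intro s hs x
      rw [aux_Kst_self K Fa (by omega)]
      exact hFa0 x
    | succ n ih =>
      intro s hs x
      have hst' : s < t := by omega
      rw [aux_Kst_succ K Fa hst']
      apply tsum_nonneg
      intro y
      exact mul_nonneg ((hMar (s + 1) (by omega)).1 x y) (ih (s + 1) (by omega) y)
  have hdom_sum : ∀ n s, t - s = n → 1 ≤ s → s ≤ t →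
      Summable fun x => π s x * Kst K s t Fa x := by
    intro n
    induction n with
    | zero =>
      intro s hs hs1 hs2
      have hseq : s = t := by omega
      subst hseq
      rw [aux_Kst_self K Fa le_rfl]
      exact hf1
    | succ n ih =>
      intro s hs hs1 hs2
      have hst' : s < t := by omega
      rw [aux_Kst_succ K Fa hst']
      have ihs := ih (s + 1) (by omega) (by omega) (by omega)
      have hstat := aux_act_stationary (hMar (s + 1) (by omega)).1
        (hpos (s + 1) (by omega)) (hst (s + 1) (by omega))
        (fun y => hKst_nonneg (t - (s + 1)) (s + 1) rfl y) ihs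
      apply Summable.of_nonneg_of_le _ _ hstat
      · intro x
        apply mul_nonneg (hpos s hs1 x).le
        apply tsum_nonneg
        intro y
        exact mul_nonneg ((hMar (s + 1) (by omega)).1 x y)
          (hKst_nonneg (t - (s + 1)) (s + 1) rfl y)
      · intro x
        apply mul_le_mul_of_nonneg_right (hπmono s (s + 1) hs1 (by omega) x)
        apply tsum_nonneg
        intro y
        exact mul_nonneg ((hMar (s + 1) (by omega)).1 x y)
          (hKst_nonneg (t - (s + 1)) (s + 1) rfl y)
  -- row summability against the dominating chain
  have hrow : ∀ s, s < t → ∀ x, Summable fun y => K (s + 1) x y * Kst K (s + 1) t Fa y := by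
    intro s hst' x
    exact aux_row_summable_of_meas (hMar (s + 1) (by omega)).1 (hpos (s + 1) (by omega))
      (hst (s + 1) (by omega)) (fun y => hKst_nonneg (t - (s + 1)) (s + 1) rfl y)
      (hdom_sum (t - (s + 1)) (s + 1) rfl (by omega) (by omega)) x
  -- domination of truncated chains
  have hdomchain : ∀ n s, t - s = n → ∀ (g : V → ℝ), (∀ x, |g x| ≤ Fa x) →
      ∀ x, |Kst K s t g x| ≤ Kst K s t Fa x := by
    intro n
    induction n with
    | zero =>
      intro s hs g hg x
      rw [aux_Kst_self K g (by omega), aux_Kst_self K Fa (by omega)]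
      exact hg x
    | succ n ih =>
      intro s hs g hg x
      have hst' : s < t := by omega
      rw [aux_Kst_succ K g hst', aux_Kst_succ K Fa hst']
      exact aux_act_abs_le (fun y => (hMar (s + 1) (by omega)).1 x y)
        (ih (s + 1) (by omega) g hg) (hrow s hst' x)
  -- pointwise convergence of truncated chains
  have hconv : ∀ n s, t - s = n → ∀ x,
      Tendsto (fun N => Kst K s t (fN N) x) atTop (𝓝 (Kst K s t f x)) := by
    intro n
    induction n with
    | zero =>
      intro s hs x
      have hev : ∀ᶠ N : ℕ in atTop, (fun N => f x) N = fN N x := by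
        rw [eventually_atTop]
        refine ⟨⌈|f x|⌉₊, fun N hN => ?_⟩
        simp only [hfN]
        rw [if_pos (le_trans (Nat.le_ceil _) (Nat.cast_le.mpr hN))]
      have h1 : Tendsto (fun N : ℕ => Kst K s t (fN N) x) atTop (𝓝 (f x)) := by
        apply Tendsto.congr' _ tendsto_const_nhds
        · filter_upwards [hev] with N hNe
          rw [aux_Kst_self K (fN N) (by omega)]
          exact hNe
      rw [aux_Kst_self K f (by omega)]
      exact h1
    | succ n ih =>
      intro s hs x
      have hst' : s < t := by omega
      have e : ∀ g : V → ℝ, Kst K s t g = act (K (s + 1)) (Kst K (s + 1) t g) :=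
        fun g => aux_Kst_succ K g hst'
      simp only [e]
      have hDCT := tendsto_tsum_of_dominated_convergence
        (f := fun (N : ℕ) (y : V) => K (s + 1) x y * Kst K (s + 1) t (fN N) y)
        (g := fun y => K (s + 1) x y * Kst K (s + 1) t f y)
        (bound := fun y => K (s + 1) x y * Kst K (s + 1) t Fa y)
        (hrow s hst' x)
        (fun y => Tendsto.const_mul _ (ih (s + 1) (by omega) y))
        (by
          apply Filter.Eventually.of_forall
          intro N y
          rw [Real.norm_eq_abs, abs_mul, abs_of_nonneg ((hMar (s + 1) (by omega)).1 x y)]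
          exact mul_le_mul_of_nonneg_left
            (hdomchain (t - (s + 1)) (s + 1) rfl (fN N) (hfNf N) y)
            ((hMar (s + 1) (by omega)).1 x y))
      exact hDCT
  -- bounded-case estimate for each truncation
  have hbnd : ∀ N : ℕ, lpnorm (nmz (π 1)) p (Kst K 0 t (fN N)) ≤ Cst := by
    intro N
    have h1 := aux_bounded K π henv hmass α hα hHC q hq t ht p hp1 hp (fN N)
      (N : ℝ) (Nat.cast_nonneg N) (hfNb N)
    refine h1.trans ?_
    rw [hCst]
    apply (div_le_div_iff_of_pos_right (Real.rpow_pos_of_pos (hMpos 1 le_rfl) _)).mpr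
    apply mul_le_mul_of_nonneg_right _ (Real.rpow_nonneg (hMpos t ht).le _)
    -- lpnorm of truncation is at most lpnorm of f
    unfold lpnorm
    apply Real.rpow_le_rpow (tsum_nonneg fun x => mul_nonneg (hnmz0 t ht x)
      (Real.rpow_nonneg (abs_nonneg _) _)) _ (by positivity)
    have hfsum : Summable fun x => nmz (π t) x * |f x| ^ q := by
      apply Summable.congr (hf.div_const (mass (π t)))
      intro x
      simp only [nmz]
      ring
    apply Summable.tsum_le_tsum _ _ hfsum
    · intro x
      exact mul_le_mul_of_nonneg_left
        (Real.rpow_le_rpow (abs_nonneg _) (hfNf N x) hq0.le) (hnmz0 t ht x)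
    · apply Summable.of_nonneg_of_le _ _ hfsum
      · intro x
        exact mul_nonneg (hnmz0 t ht x) (Real.rpow_nonneg (abs_nonneg _) _)
      · intro x
        exact mul_le_mul_of_nonneg_left
          (Real.rpow_le_rpow (abs_nonneg _) (hfNf N x) hq0.le) (hnmz0 t ht x)
  -- each truncated chain gives a tsum bound
  have hNsum : ∀ N : ℕ, Summable fun x => nmz (π 1) x * |Kst K 0 t (fN N) x| ^ p := by
    intro N
    apply Summable.of_nonneg_of_le
      (fun x => mul_nonneg (hnmz0 1 le_rfl x) (Real.rpow_nonneg (abs_nonneg _) _)) _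
      (((hsum 1 le_rfl).div_const (mass (π 1))).mul_right ((N : ℝ) ^ p))
    intro x
    have hb := aux_Kst_bound K hMar (Nat.cast_nonneg N) (hfNb N) t (t - 0) 0 rfl x
    exact mul_le_mul_of_nonneg_left
      (Real.rpow_le_rpow (abs_nonneg _) hb hp0.le) (hnmz0 1 le_rfl x)
  have hNle : ∀ N : ℕ, (∑' x, nmz (π 1) x * |Kst K 0 t (fN N) x| ^ p) ≤ Cst ^ p := by
    intro N
    have htn : (0:ℝ) ≤ ∑' x, nmz (π 1) x * |Kst K 0 t (fN N) x| ^ p :=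
      tsum_nonneg fun x => mul_nonneg (hnmz0 1 le_rfl x) (Real.rpow_nonneg (abs_nonneg _) _)
    have h2 : (∑' x, nmz (π 1) x * |Kst K 0 t (fN N) x| ^ p) =
        ((∑' x, nmz (π 1) x * |Kst K 0 t (fN N) x| ^ p) ^ (1 / p)) ^ p := by
      rw [← Real.rpow_mul htn, one_div, inv_mul_cancel₀ (ne_of_gt hp0), Real.rpow_one]
    rw [h2]
    exact Real.rpow_le_rpow (Real.rpow_nonneg htn _) (hbnd N) hp0.le
  -- Fatou via partial sums
  have hfin : ∀ S : Finset V, (∑ x ∈ S, nmz (π 1) x * |Kst K 0 t f x| ^ p) ≤ Cst ^ p := by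
    intro S
    have htend : Tendsto (fun N => ∑ x ∈ S, nmz (π 1) x * |Kst K 0 t (fN N) x| ^ p) atTop
        (𝓝 (∑ x ∈ S, nmz (π 1) x * |Kst K 0 t f x| ^ p)) := by
      apply tendsto_finset_sum
      intro x _
      have h1 := hconv (t - 0) 0 rfl x
      have h2 := (continuous_abs.tendsto _).comp h1
      have h3 := (Real.continuousAt_rpow_const _ p (Or.inr hp0.le)).tendsto.comp h2
      exact h3.const_mul _
    apply le_of_tendsto htend
    filter_upwards with N
    exact le_trans (Summable.sum_le_tsum S (fun x _ => mul_nonneg (hnmz0 1 le_rfl x)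
      (Real.rpow_nonneg (abs_nonneg _) _)) (hNsum N)) (hNle N)
  have hsum0 : Summable fun x => nmz (π 1) x * |Kst K 0 t f x| ^ p :=
    summable_of_sum_le (fun x => mul_nonneg (hnmz0 1 le_rfl x)
      (Real.rpow_nonneg (abs_nonneg _) _)) hfin
  have htsum0 : (∑' x, nmz (π 1) x * |Kst K 0 t f x| ^ p) ≤ Cst ^ p :=
    Summable.tsum_le_of_sum_le hsum0 hfin
  have hnn0 : (0:ℝ) ≤ ∑' x, nmz (π 1) x * |Kst K 0 t f x| ^ p :=
    tsum_nonneg fun x => mul_nonneg (hnmz0 1 le_rfl x) (Real.rpow_nonneg (abs_nonneg _) _)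
  calc lpnorm (nmz (π 1)) p (Kst K 0 t f)
      = (∑' x, nmz (π 1) x * |Kst K 0 t f x| ^ p) ^ (1 / p) := rfl
    _ ≤ (Cst ^ p) ^ (1 / p) := Real.rpow_le_rpow hnn0 htsum0 (by positivity)
    _ = Cst := by
        rw [← Real.rpow_mul hCst0, mul_one_div, div_self (ne_of_gt hp0), Real.rpow_one]
end
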